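/- arXiv:2208.07300 — 4 statements merged into one kernel-verified Lean document; each statement's English description precedes it below -/
import Mathlib

section
/- Let 𝓑 be a basis of a Banach space X and 𝐧 a strictly increasing sequence of positive integers. For every m ≥ 1 the following upper bounds hold (as inequalities in [0,∞]): (i) L̂^𝐧_m ≤ 1 + 2κm, where κ = sup_{j,k} ‖e_j‖‖e_k*‖; (ii) L̂^𝐧_m ≤ g_m^c + g̃_m·sc^𝐧_m; (iii) L̂^𝐧_m ≤ g^c_{m−1}·ω^𝐧_m. -/
open scoped BigOperators ENNReal NNReal

/-- The collection `𝕋(𝐧)`: pairs of finite sets `(A, D)` with `A ⊆ 𝐧`, `|A| ≤ |D|`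
and `A < D ∩ 𝐧`. -/
def TPair (seq : ℕ → ℕ) (A D : Finset ℕ) : Prop :=
  (↑A : Set ℕ) ⊆ Set.range seq ∧ A.card ≤ D.card ∧
    ∀ a ∈ A, ∀ d ∈ D, d ∈ Set.range seq → a < d

/-- The collection `𝕊(𝐧)`: pairs of finite sets `(A, D)` with `A ⊆ 𝐧` and `|A| ≤ |D|`. -/
def SPair (seq : ℕ → ℕ) (A D : Finset ℕ) : Prop :=
  (↑A : Set ℕ) ⊆ Set.range seq ∧ A.card ≤ D.card

/-- The interval `{n_{k+1}, …, n_{k+m}}` of `m` consecutive terms of the sequence `seq`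
(0-indexed: `seq k, …, seq (k+m-1)`). -/
def intervalSet (seq : ℕ → ℕ) (k m : ℕ) : Finset ℕ :=
  (Finset.range m).image fun i => seq (k + i)

/-- The (1-based) index `ι(max A)` of the largest element of `A` in the sequence `seq`
(`0` if `A` is empty). -/
noncomputable def iotaMax (seq : ℕ → ℕ) (A : Finset ℕ) : ℕ :=
  if h : A.Nonempty then sInf {i | seq i = A.max' h} + 1 else 0

/-- The collection `𝕋^ω(𝐧)`: pairs of finite sets `(A, D)` with `A ⊆ 𝐧`, `ω(A) ≤ ω(D)`
and `A < D ∩ 𝐧`. -/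
def WTPair (w : Set ℕ → ℝ≥0∞) (seq : ℕ → ℕ) (A D : Finset ℕ) : Prop :=
  (↑A : Set ℕ) ⊆ Set.range seq ∧ w (↑A : Set ℕ) ≤ w (↑D : Set ℕ) ∧
    ∀ a ∈ A, ∀ d ∈ D, d ∈ Set.range seq → a < d

/-- A (semi-normalized) basis `(e_n)` of a Banach space `X`, together with its biorthogonal
functionals `(e_n^*)`: the span of the `e_n` is norm-dense, `e_j^*(e_k) = δ_{jk}`, and the
norms of the `e_n` and `e_n^*` are bounded above and away from zero. -/
structure BasisOf (𝕜 : Type*) (X : Type*) [RCLike 𝕜] [NormedAddCommGroup X]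
    [NormedSpace 𝕜 X] where
  e : ℕ → X
  coord : ℕ → X →L[𝕜] 𝕜
  dense_span : Dense (↑(Submodule.span 𝕜 (Set.range e)) : Set X)
  biorth : ∀ j k : ℕ, coord j (e k) = if j = k then (1 : 𝕜) else 0
  norm_bounds : ∃ c₁ c₂ : ℝ, 0 < c₁ ∧ (∀ n, c₁ ≤ ‖e n‖ ∧ c₁ ≤ ‖coord n‖) ∧
    ∀ n, ‖e n‖ ≤ c₂ ∧ ‖coord n‖ ≤ c₂

namespace BasisOf

variable {𝕜 : Type*} {X : Type*} [RCLike 𝕜] [NormedAddCommGroup X] [NormedSpace 𝕜 X]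
variable (B : BasisOf 𝕜 X)

/-- The projection `P_A(x) = ∑_{n ∈ A} e_n^*(x) e_n`. -/
noncomputable def proj (A : Finset ℕ) (x : X) : X := ∑ n ∈ A, B.coord n x • B.e n

/-- `1_{εA} = ∑_{n ∈ A} ε_n e_n`. -/
noncomputable def sgnSum (ε : ℕ → 𝕜) (A : Finset ℕ) : X := ∑ n ∈ A, ε n • B.e n

/-- `1_A = ∑_{n ∈ A} e_n`. -/
noncomputable def ones (A : Finset ℕ) : X := ∑ n ∈ A, B.e n

/-- `P^𝐧_m(x) = ∑_{i=1}^m e_{n_i}^*(x) e_{n_i}`, the projection on the first `m` terms of the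
subsequence given by `seq`. -/
noncomputable def projSeq (seq : ℕ → ℕ) (m : ℕ) (x : X) : X :=
  ∑ i ∈ Finset.range m, B.coord (seq i) x • B.e (seq i)

/-- `A` is a greedy set of `x`: the coefficients inside `A` dominate those outside. -/
def IsGreedySet (x : X) (A : Finset ℕ) : Prop :=
  ∀ a ∈ A, ∀ b ∉ A, ‖B.coord b x‖ ≤ ‖B.coord a x‖

/-- The support `{n : e_n^*(x) ≠ 0}`. -/
def supp (x : X) : Set ℕ := {n | B.coord n x ≠ 0}

/-- `𝓑` is `C`-(`𝐧`, strong partially greedy):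
`‖x - G_m(x)‖ ≤ C ⋅ σ̂^𝐧_m(x)` for all `x`, all `m ≥ 1` and all greedy sums. -/
def SPGWith (seq : ℕ → ℕ) (C : ℝ) : Prop :=
  ∀ x : X, ∀ m : ℕ, 1 ≤ m → ∀ A : Finset ℕ, A.card = m → B.IsGreedySet x A →
    ∀ k : ℕ, k ≤ m → ‖x - B.proj A x‖ ≤ C * ‖x - B.projSeq seq k x‖

/-- `𝓑` is (`𝐧`, strong partially greedy). -/
def SPG (seq : ℕ → ℕ) : Prop := ∃ C : ℝ, 1 ≤ C ∧ B.SPGWith seq C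

/-- `𝓑` is quasi-greedy with constant `C`. -/
def QuasiGreedyWith (C : ℝ) : Prop :=
  ∀ x : X, ∀ A : Finset ℕ, A.Nonempty → B.IsGreedySet x A → ‖B.proj A x‖ ≤ C * ‖x‖

/-- `𝓑` is quasi-greedy. -/
def QuasiGreedy : Prop := ∃ C : ℝ, B.QuasiGreedyWith C

/-- `𝓑` is suppression quasi-greedy with constant `C`. -/
def SuppQGWith (C : ℝ) : Prop :=
  ∀ x : X, ∀ A : Finset ℕ, A.Nonempty → B.IsGreedySet x A → ‖x - B.proj A x‖ ≤ C * ‖x‖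

/-- `𝓑` is `C`-(`𝐧`, PSLC). -/
def PSLCWith (seq : ℕ → ℕ) (C : ℝ) : Prop :=
  ∀ x : X, (∀ n, ‖B.coord n x‖ ≤ 1) → ∀ A D : Finset ℕ, TPair seq A D →
    (∀ d ∈ D, B.coord d x = 0) →
    (∀ a ∈ A, ∀ j : ℕ, (j ∈ D ∨ B.coord j x ≠ 0) → j ∈ Set.range seq → a < j) →
    ∀ ε δ : ℕ → 𝕜, (∀ n, ‖ε n‖ = 1) → (∀ n, ‖δ n‖ = 1) →
      ‖x + B.sgnSum ε A‖ ≤ C * ‖x + B.sgnSum δ D‖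

/-- `𝓑` is (`𝐧`, PSLC). -/
def PSLC (seq : ℕ → ℕ) : Prop := ∃ C : ℝ, 1 ≤ C ∧ B.PSLCWith seq C

/-- `𝓑` is (`𝐧`, superconservative) with constant `C`. -/
def SuperconservativeWith (seq : ℕ → ℕ) (C : ℝ) : Prop :=
  ∀ A D : Finset ℕ, TPair seq A D →
    ∀ ε δ : ℕ → 𝕜, (∀ n, ‖ε n‖ = 1) → (∀ n, ‖δ n‖ = 1) →
      ‖B.sgnSum ε A‖ ≤ C * ‖B.sgnSum δ D‖

/-- `𝓑` is (`𝐧`, superconservative). -/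
def Superconservative (seq : ℕ → ℕ) : Prop :=
  ∃ C : ℝ, 0 < C ∧ B.SuperconservativeWith seq C

/-- `𝓑` is (`𝐧`, conservative) with constant `C`. -/
def ConservativeWith (seq : ℕ → ℕ) (C : ℝ) : Prop :=
  ∀ A D : Finset ℕ, TPair seq A D → ‖B.ones A‖ ≤ C * ‖B.ones D‖

/-- `𝓑` is (`𝐧`, conservative). -/
def Conservative (seq : ℕ → ℕ) : Prop := ∃ C : ℝ, 0 < C ∧ B.ConservativeWith seq C

/-- `𝓑` is (`𝐧`, democratic) with constant `C`. -/
def DemocraticWith (seq : ℕ → ℕ) (C : ℝ) : Prop :=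
  ∀ A D : Finset ℕ, SPair seq A D → ‖B.ones A‖ ≤ C * ‖B.ones D‖

/-- `𝓑` is (`𝐧`, democratic). -/
def Democratic (seq : ℕ → ℕ) : Prop := ∃ C : ℝ, B.DemocraticWith seq C

/-- `𝓑` is (`𝐧`, almost greedy) with constant `C`:
`‖x - G_m(x)‖ ≤ C σ̃^𝐧_m(x)` where `σ̃^𝐧_m(x) = inf {‖x - P_D(x)‖ : D ⊆ 𝐧, |D| = m}`. -/
def AlmostGreedyWith (seq : ℕ → ℕ) (C : ℝ) : Prop :=
  ∀ x : X, ∀ m : ℕ, 1 ≤ m → ∀ A : Finset ℕ, A.card = m → B.IsGreedySet x A →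
    ∀ D : Finset ℕ, (↑D : Set ℕ) ⊆ Set.range seq → D.card = m →
      ‖x - B.proj A x‖ ≤ C * ‖x - B.proj D x‖

/-- `𝓑` is (`𝐧`, almost greedy). -/
def AlmostGreedy (seq : ℕ → ℕ) : Prop := ∃ C : ℝ, 1 ≤ C ∧ B.AlmostGreedyWith seq C

/-- `𝓑` is 1-unconditional. -/
def OneUnconditional : Prop :=
  ∀ (F : Finset ℕ) (a b : ℕ → 𝕜), (∀ n, ‖a n‖ ≤ ‖b n‖) →
    ‖∑ n ∈ F, a n • B.e n‖ ≤ ‖∑ n ∈ F, b n • B.e n‖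

/-- `𝓑` is `C`-(`𝐧`, consecutive almost greedy) of type I. -/
def CAGIWith (seq : ℕ → ℕ) (C : ℝ) : Prop :=
  ∀ x : X, ∀ m : ℕ, 1 ≤ m → ∀ A : Finset ℕ, A.card = m → B.IsGreedySet x A →
    ∀ k : ℕ, ‖x - B.proj A x‖ ≤ C * ‖x - B.proj (intervalSet seq k m) x‖

/-- `𝓑` is `C`-(`𝐧`, consecutive almost greedy) of type II. -/
def CAGIIWith (seq : ℕ → ℕ) (C : ℝ) : Prop :=
  ∀ x : X, ∀ m : ℕ, 1 ≤ m → ∀ A : Finset ℕ, A.card = m → B.IsGreedySet x A →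
    ∀ k p : ℕ, ((↑(intervalSet seq k p) : Set ℕ) ∩ B.supp x).ncard ≤ m →
      ‖x - B.proj A x‖ ≤ C * ‖x - B.proj (intervalSet seq k p) x‖

/-- `𝓑` is `C`-(`𝐧`, RSLC). -/
def RSLCWith (seq : ℕ → ℕ) (C : ℝ) : Prop :=
  ∀ x : X, (∀ n, ‖B.coord n x‖ ≤ 1) → ∀ A D : Finset ℕ, SPair seq A D →
    (∀ d ∈ D, B.coord d x = 0) →
    (∀ j : ℕ, (j ∈ D ∨ B.coord j x ≠ 0) → j ∈ Set.range seq →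
      (∀ a ∈ A, j < a) ∨ (∀ a ∈ A, a < j)) →
    ∀ ε δ : ℕ → 𝕜, (∀ n, ‖ε n‖ = 1) → (∀ n, ‖δ n‖ = 1) →
      ‖x + B.sgnSum ε A‖ ≤ C * ‖x + B.sgnSum δ D‖

/-- `𝓑` is `C`-(`𝐧`, SLC). -/
def SLCWith (seq : ℕ → ℕ) (C : ℝ) : Prop :=
  ∀ x : X, (∀ n, ‖B.coord n x‖ ≤ 1) → ∀ A D : Finset ℕ, SPair seq A D →
    Disjoint A D → (∀ a ∈ A, B.coord a x = 0) → (∀ d ∈ D, B.coord d x = 0) →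
    ∀ ε δ : ℕ → 𝕜, (∀ n, ‖ε n‖ = 1) → (∀ n, ‖δ n‖ = 1) →
      ‖x + B.sgnSum ε A‖ ≤ C * ‖x + B.sgnSum δ D‖

/-- The Lebesgue-type parameter `L̂^𝐧_m`: the least constant `C ∈ [0,∞]` with
`‖x - G_m(x)‖ ≤ C σ̂^𝐧_m(x)` for all `x` and all greedy sums `G_m(x)`. -/
noncomputable def Lhat (seq : ℕ → ℕ) (m : ℕ) : ℝ≥0∞ :=
  sInf {C : ℝ≥0∞ | ∀ (x : X) (A : Finset ℕ), A.card = m → B.IsGreedySet x A →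
    ∀ k : ℕ, k ≤ m →
      (‖x - B.proj A x‖₊ : ℝ≥0∞) ≤ C * (‖x - B.projSeq seq k x‖₊ : ℝ≥0∞)}

/-- The parameter `g_m^c`. -/
noncomputable def gc (m : ℕ) : ℝ≥0∞ :=
  ⨆ (x : X) (_ : x ≠ 0) (A : Finset ℕ) (_ : A.card ≤ m) (_ : B.IsGreedySet x A),
    (‖x - B.proj A x‖₊ : ℝ≥0∞) / (‖x‖₊ : ℝ≥0∞)

/-- The parameter `g̃_m`. -/
noncomputable def gtilde (m : ℕ) : ℝ≥0∞ :=
  ⨆ (x : X) (_ : x ≠ 0) (A : Finset ℕ) (A' : Finset ℕ) (_ : A ⊆ A') (_ : A.card < A'.card)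
    (_ : A'.card ≤ m) (_ : B.IsGreedySet x A) (_ : B.IsGreedySet x A'),
    (‖B.proj A' x - B.proj A x‖₊ : ℝ≥0∞) / (‖x‖₊ : ℝ≥0∞)

/-- The parameter `sc^𝐧_m`. -/
noncomputable def scParam (seq : ℕ → ℕ) (m : ℕ) : ℝ≥0∞ :=
  ⨆ (A : Finset ℕ) (D : Finset ℕ) (_ : TPair seq A D) (_ : D.card ≤ m)
    (_ : ∀ a ∈ A, a ≤ seq (m - 1)) (ε : ℕ → 𝕜) (_ : ∀ n, ‖ε n‖ = 1)
    (δ : ℕ → 𝕜) (_ : ∀ n, ‖δ n‖ = 1),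
    (‖B.sgnSum ε A‖₊ : ℝ≥0∞) / (‖B.sgnSum δ D‖₊ : ℝ≥0∞)

/-- The parameter `ω^𝐧_m`. -/
noncomputable def omegaParam (seq : ℕ → ℕ) (m : ℕ) : ℝ≥0∞ :=
  ⨆ (x : X) (_ : ∀ n, ‖B.coord n x‖ ≤ 1) (A : Finset ℕ) (D : Finset ℕ)
    (_ : (↑A : Set ℕ) ⊆ Set.range seq) (_ : A.card ≤ D.card) (_ : D.card ≤ m)
    (_ : ∀ a ∈ A, a ≤ seq (m - 1)) (_ : ∀ d ∈ D, B.coord d x = 0)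
    (_ : ∀ a ∈ A, ∀ j : ℕ, (j ∈ D ∨ B.coord j x ≠ 0) → j ∈ Set.range seq → a < j)
    (ε : ℕ → 𝕜) (_ : ∀ n, ‖ε n‖ = 1) (δ : ℕ → 𝕜) (_ : ∀ n, ‖δ n‖ = 1),
    (‖x + B.sgnSum ε A‖₊ : ℝ≥0∞) / (‖x + B.sgnSum δ D‖₊ : ℝ≥0∞)

/-- The parameter `ω̂^𝐧_m`. -/
noncomputable def omegaHatParam (seq : ℕ → ℕ) (m : ℕ) : ℝ≥0∞ :=
  ⨆ (x : X) (_ : ∀ n, ‖B.coord n x‖ ≤ 1) (A : Finset ℕ) (D : Finset ℕ)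
    (_ : (↑A : Set ℕ) ⊆ Set.range seq) (_ : A.card ≤ D.card) (_ : D.card ≤ m)
    (_ : ∀ a ∈ A, a ≤ seq (m - 1))
    (_ : ∀ d ∈ D, B.coord d (x - B.proj A x) = 0)
    (_ : ∀ a ∈ A, ∀ j : ℕ, (j ∈ D ∨ B.coord j (x - B.proj A x) ≠ 0) →
      j ∈ Set.range seq → a < j)
    (ε : ℕ → 𝕜) (_ : ∀ n, ‖ε n‖ = 1),
    (‖x‖₊ : ℝ≥0∞) / (‖x - B.proj A x + B.sgnSum ε D‖₊ : ℝ≥0∞)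

/-- `κ = sup_{j,k} ‖e_j‖ ‖e_k^*‖`. -/
noncomputable def kappa : ℝ≥0∞ :=
  ⨆ (j : ℕ) (k : ℕ), ((‖B.e j‖₊ * ‖B.coord k‖₊ : ℝ≥0) : ℝ≥0∞)

/-- `𝓑` is `𝐬`-(`𝐧`, strong partially greedy) with constant `C`:
the strong partially greedy inequality for all orders `m` in the sequence `s`. -/
def SPGOnWith (seq : ℕ → ℕ) (s : ℕ → ℕ) (C : ℝ) : Prop :=
  ∀ x : X, ∀ i : ℕ, ∀ A : Finset ℕ, A.card = s i → B.IsGreedySet x A →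
    ∀ k : ℕ, k ≤ s i → ‖x - B.proj A x‖ ≤ C * ‖x - B.projSeq seq k x‖

/-- `𝓑` is (`λ`, `𝐧`, strong partially greedy). -/
def LamSPG (seq : ℕ → ℕ) (lam : ℝ) : Prop :=
  ∃ C : ℝ, 1 ≤ C ∧ ∀ x : X, ∀ m : ℕ, 1 ≤ m →
    ∀ A : Finset ℕ, A.card = ⌈lam * (m : ℝ)⌉₊ → B.IsGreedySet x A →
      ∀ k : ℕ, k ≤ m → ‖x - B.proj A x‖ ≤ C * ‖x - B.projSeq seq k x‖

/-- `𝓑` is (`λ`, `𝐧`, PSLC). -/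
def LamPSLC (seq : ℕ → ℕ) (lam : ℝ) : Prop :=
  ∃ C : ℝ, 1 ≤ C ∧ ∀ x : X, (∀ n, ‖B.coord n x‖ ≤ 1) →
    ∀ A D : Finset ℕ, (↑A : Set ℕ) ⊆ Set.range seq → A.card ≤ D.card →
      (lam - 1) * (iotaMax seq A : ℝ) + A.card ≤ D.card →
      (∀ d ∈ D, B.coord d x = 0) →
      (∀ a ∈ A, ∀ j : ℕ, (j ∈ D ∨ B.coord j x ≠ 0) → j ∈ Set.range seq → a < j) →
      ∀ ε δ : ℕ → 𝕜, (∀ n, ‖ε n‖ = 1) → (∀ n, ‖δ n‖ = 1) →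
        ‖x + B.sgnSum ε A‖ ≤ C * ‖x + B.sgnSum δ D‖

/-- `𝓑` is (`λ`, `𝐧`, superconservative). -/
def LamSuperconservative (seq : ℕ → ℕ) (lam : ℝ) : Prop :=
  ∃ C : ℝ, 0 < C ∧ ∀ A D : Finset ℕ, TPair seq A D →
    (lam - 1) * (iotaMax seq A : ℝ) + A.card ≤ D.card →
    ∀ ε δ : ℕ → 𝕜, (∀ n, ‖ε n‖ = 1) → (∀ n, ‖δ n‖ = 1) →
      ‖B.sgnSum ε A‖ ≤ C * ‖B.sgnSum δ D‖

/-- `𝓑` is (`λ`, `𝐧`, conservative). -/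
def LamConservative (seq : ℕ → ℕ) (lam : ℝ) : Prop :=
  ∃ C : ℝ, 0 < C ∧ ∀ A D : Finset ℕ, TPair seq A D →
    (lam - 1) * (iotaMax seq A : ℝ) + A.card ≤ D.card →
    ‖B.ones A‖ ≤ C * ‖B.ones D‖

/-- `𝓑` is `ω`-(`𝐧`, strong partially greedy) for the weight on sets `w`. -/
def WSPG (seq : ℕ → ℕ) (w : Set ℕ → ℝ≥0∞) : Prop :=
  ∃ C : ℝ, 1 ≤ C ∧ ∀ x : X, ∀ m : ℕ, 1 ≤ m → ∀ A : Finset ℕ, A.card = m →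
    B.IsGreedySet x A → ∀ m' : ℕ,
      w (↑((Finset.range m').image seq \ A) : Set ℕ) ≤
        w (↑(A \ (Finset.range m').image seq) : Set ℕ) →
      ‖x - B.proj A x‖ ≤ C * ‖x - B.proj ((Finset.range m').image seq) x‖

/-- `𝓑` is `ω`-(`𝐧`, PSLC). -/
def WPSLC (seq : ℕ → ℕ) (w : Set ℕ → ℝ≥0∞) : Prop :=
  ∃ C : ℝ, 1 ≤ C ∧ ∀ x : X, (∀ n, ‖B.coord n x‖ ≤ 1) →
    ∀ A D : Finset ℕ, WTPair w seq A D →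
      (∀ d ∈ D, B.coord d x = 0) →
      (∀ a ∈ A, ∀ j : ℕ, (j ∈ D ∨ B.coord j x ≠ 0) → j ∈ Set.range seq → a < j) →
      ∀ ε δ : ℕ → 𝕜, (∀ n, ‖ε n‖ = 1) → (∀ n, ‖δ n‖ = 1) →
        ‖x + B.sgnSum ε A‖ ≤ C * ‖x + B.sgnSum δ D‖

/-- `𝓑` is `ω`-(`𝐧`, superconservative). -/
def WSuperconservative (seq : ℕ → ℕ) (w : Set ℕ → ℝ≥0∞) : Prop :=
  ∃ C : ℝ, 0 < C ∧ ∀ A D : Finset ℕ, WTPair w seq A D →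
    ∀ ε δ : ℕ → 𝕜, (∀ n, ‖ε n‖ = 1) → (∀ n, ‖δ n‖ = 1) →
      ‖B.sgnSum ε A‖ ≤ C * ‖B.sgnSum δ D‖

/-- `𝓑` is `ω`-(`𝐧`, conservative). -/
def WConservative (seq : ℕ → ℕ) (w : Set ℕ → ℝ≥0∞) : Prop :=
  ∃ C : ℝ, 0 < C ∧ ∀ A D : Finset ℕ, WTPair w seq A D → ‖B.ones A‖ ≤ C * ‖B.ones D‖

end BasisOf

/-- A Banach space over `𝕜` equipped with a basis. -/
structure BanachWithBasis (𝕜 : Type*) [RCLike 𝕜] where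
  carrier : Type
  [grp : NormedAddCommGroup carrier]
  [mod : NormedSpace 𝕜 carrier]
  [comp : CompleteSpace carrier]
  basis : BasisOf 𝕜 carrier

attribute [instance] BanachWithBasis.grp BanachWithBasis.mod BanachWithBasis.comp
section Aux

namespace StmtSix

variable {𝕜 X : Type*} [RCLike 𝕜] [NormedAddCommGroup X] [NormedSpace 𝕜 X]

lemma nnnorm_coe_ofReal (r : ℝ) : ‖((r : ℝ) : 𝕜)‖₊ = ‖r‖₊ := by
  ext; simp [RCLike.norm_ofReal, Real.norm_eq_abs]

lemma coe_nnnorm_ofReal (r : ℝ) (hr : 0 ≤ r) : ((‖((r : ℝ) : 𝕜)‖₊ : ℝ≥0) : ℝ≥0∞) = ENNReal.ofReal r := by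
  rw [nnnorm_coe_ofReal, ENNReal.ofReal]
  congr 1
  rw [Real.nnnorm_of_nonneg hr]
  exact (Real.toNNReal_of_nonneg hr).symm

variable (Bs : BasisOf 𝕜 X)

lemma e_ne_zero (n : ℕ) : Bs.e n ≠ 0 := by
  obtain ⟨c₁, c₂, hc₁, hlow, _⟩ := Bs.norm_bounds
  intro h
  have := (hlow n).1
  rw [h, norm_zero] at this
  linarith

lemma coord_proj (A : Finset ℕ) (x : X) (n : ℕ) :
    Bs.coord n (Bs.proj A x) = if n ∈ A then Bs.coord n x else 0 := by
  unfold BasisOf.proj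
  rw [map_sum]
  rw [Finset.sum_congr rfl (fun a _ => ?_), Finset.sum_ite_eq' A n (fun a => Bs.coord a x)]
  rw [map_smul, Bs.biorth n a]
  rcases eq_or_ne a n with h | h
  · subst h; simp
  · simp [h, Ne.symm h]

lemma coord_sgnSum (ε : ℕ → 𝕜) (A : Finset ℕ) (n : ℕ) :
    Bs.coord n (Bs.sgnSum ε A) = if n ∈ A then ε n else 0 := by
  unfold BasisOf.sgnSum
  rw [map_sum]
  rw [Finset.sum_congr rfl (fun a _ => ?_), Finset.sum_ite_eq' A n (fun a => ε a)]
  rw [map_smul, Bs.biorth n a]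
  rcases eq_or_ne a n with h | h
  · subst h; simp
  · simp [h, Ne.symm h]

lemma coord_sub_projN (x : X) (N : Finset ℕ) (n : ℕ) :
    Bs.coord n (x - Bs.proj N x) = if n ∈ N then 0 else Bs.coord n x := by
  rw [map_sub, coord_proj]
  split <;> simp

lemma proj_empty (x : X) : Bs.proj (∅ : Finset ℕ) x = 0 := Finset.sum_empty

lemma projSeq_eq (seq : ℕ → ℕ) (hseq : StrictMono seq) (k : ℕ) (x : X) :
    Bs.projSeq seq k x = Bs.proj ((Finset.range k).image seq) x := by
  unfold BasisOf.projSeq BasisOf.proj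
  rw [Finset.sum_image (fun a _ b _ h => hseq.injective h)]

lemma decomp (x : X) (A N : Finset ℕ) :
    x - Bs.proj A x
      = (x - Bs.proj N x - Bs.proj (A \ N) (x - Bs.proj N x)) + Bs.proj (N \ A) x := by
  have h1 : Bs.proj (A \ N) (x - Bs.proj N x) = Bs.proj (A \ N) x :=
    Finset.sum_congr rfl fun n hn => by
      rw [coord_sub_projN]; simp [(Finset.mem_sdiff.mp hn).2]
  rw [h1]
  have h2 : Bs.proj A x = Bs.proj (A ∩ N) x + Bs.proj (A \ N) x :=
    (Finset.sum_inter_add_sum_sdiff A N _).symm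
  have h3 : Bs.proj N x = Bs.proj (N ∩ A) x + Bs.proj (N \ A) x :=
    (Finset.sum_inter_add_sum_sdiff N A _).symm
  have h4 : Bs.proj (A ∩ N) x = Bs.proj (N ∩ A) x := by rw [Finset.inter_comm]
  rw [h2, h3, h4]; abel

lemma card_sdiff_le_card_sdiff (A N : Finset ℕ) (h : N.card ≤ A.card) :
    (N \ A).card ≤ (A \ N).card := by
  have h1 := Finset.card_sdiff_add_card_inter A N
  have h2 := Finset.card_sdiff_add_card_inter N A
  rw [Finset.inter_comm] at h2
  omega

lemma greedy_empty (x : X) : Bs.IsGreedySet x ∅ := fun a ha => absurd ha (by simp)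

lemma greedy_slice (x : X) (A N : Finset ℕ) (hg : Bs.IsGreedySet x A)
    (S : Finset ℕ) (hS : S ⊆ A \ N)
    (hslice : ∀ b ∈ S, ∀ d ∈ A \ N, d ∉ S →
      ‖Bs.coord d (x - Bs.proj N x)‖ ≤ ‖Bs.coord b (x - Bs.proj N x)‖) :
    Bs.IsGreedySet (x - Bs.proj N x) S := by
  intro a ha b hb
  have haAN := hS ha
  have haA := (Finset.mem_sdiff.mp haAN).1
  have haN := (Finset.mem_sdiff.mp haAN).2
  by_cases hbN : b ∈ N
  · rw [coord_sub_projN, if_pos hbN]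
    simp
  · rw [coord_sub_projN, if_neg hbN]
    by_cases hbA : b ∈ A
    · have h := hslice a ha b (Finset.mem_sdiff.mpr ⟨hbA, hbN⟩) hb
      rwa [coord_sub_projN, if_neg hbN] at h
    · have := hg a haA b hbA
      rwa [coord_sub_projN, if_neg haN]

lemma proj_self_of_eq (x : X) (A N : Finset ℕ) (hx : x = Bs.proj N x)
    (hcard : N.card ≤ A.card) (hg : Bs.IsGreedySet x A) : x = Bs.proj A x := by
  classical
  set S := N.filter (fun n => Bs.coord n x ≠ 0) with hSdef
  have hcoord_out : ∀ n, n ∉ N → Bs.coord n x = 0 := by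
    intro n hn
    conv_lhs => rw [hx]
    rw [coord_proj, if_neg hn]
  have hSA : S ⊆ A := by
    intro n hnS
    by_contra hnA
    have hn_ne : Bs.coord n x ≠ 0 := (Finset.mem_filter.mp hnS).2
    have hsubA : A ⊆ S := by
      intro a haA
      have hle : ‖Bs.coord n x‖ ≤ ‖Bs.coord a x‖ := hg a haA n hnA
      have ha_ne : Bs.coord a x ≠ 0 := by
        intro h0
        rw [h0, norm_zero] at hle
        exact hn_ne (norm_le_zero_iff.mp hle)
      have haN : a ∈ N := by
        by_contra h
        exact ha_ne (hcoord_out a h)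
      exact Finset.mem_filter.mpr ⟨haN, ha_ne⟩
    have hScard : S.card ≤ A.card :=
      le_trans (Finset.card_le_card (Finset.filter_subset _ _)) hcard
    have hAS : A = S := Finset.eq_of_subset_of_card_le hsubA hScard
    exact hnA (hAS ▸ hnS)
  have h1 : Bs.proj S x = Bs.proj N x :=
    Finset.sum_subset (Finset.filter_subset _ _) (fun n hnN hnS => by
      have : Bs.coord n x = 0 := by
        by_contra h
        exact hnS (Finset.mem_filter.mpr ⟨hnN, h⟩)
      rw [this, zero_smul])
  have h2 : Bs.proj S x = Bs.proj A x :=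
    Finset.sum_subset hSA (fun n hnA hnS => by
      have : Bs.coord n x = 0 := by
        by_cases hN : n ∈ N
        · by_contra h
          exact hnS (Finset.mem_filter.mpr ⟨hN, h⟩)
        · exact hcoord_out n hN
      rw [this, zero_smul])
  rw [← h2, h1, ← hx]

end StmtSix
end Aux
section Aux2
namespace StmtSix

variable {𝕜 X : Type*} [RCLike 𝕜] [NormedAddCommGroup X] [NormedSpace 𝕜 X]
variable (Bs : BasisOf 𝕜 X)

lemma exists_sign (t : ℝ) (ht : 0 ≤ t) (c : ℕ → 𝕜) (E : Finset ℕ) :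
    ∀ w : X, (∀ n ∈ E, ‖c n‖ ≤ t) →
    ∃ ε : ℕ → 𝕜, (∀ n, ‖ε n‖ = 1) ∧
      ‖w + ∑ n ∈ E, c n • Bs.e n‖ ≤ ‖w + ∑ n ∈ E, ((t : 𝕜) * ε n) • Bs.e n‖ := by
  induction E using Finset.induction_on with
  | empty =>
    intro w _
    exact ⟨fun _ => 1, fun _ => norm_one, by simp⟩
  | @insert a s ha ih =>
    intro w hc
    obtain ⟨ε₀, hε₀, h₀⟩ := ih (w + c a • Bs.e a)
      (fun n hn => hc n (Finset.mem_insert_of_mem hn))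
    set W := w + ∑ n ∈ s, ((t : 𝕜) * ε₀ n) • Bs.e n with hW
    have key : ∃ μ : 𝕜, ‖μ‖ = 1 ∧
        ‖W + c a • Bs.e a‖ ≤ ‖W + ((t:𝕜) * μ) • Bs.e a‖ := by
      rcases eq_or_lt_of_le ht with h0 | h0
      · have hca : c a = 0 := by
          have h1 := hc a (Finset.mem_insert_self a s)
          rw [← h0] at h1
          exact norm_le_zero_iff.mp h1
        exact ⟨1, norm_one, by simp [hca, ← h0]⟩
      · set θ := ‖c a‖ with hθ
        have hθ0 : 0 ≤ θ := norm_nonneg _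
        have hθt : θ ≤ t := hc a (Finset.mem_insert_self a s)
        set u : 𝕜 := if c a = 0 then 1 else c a / ((θ : ℝ) : 𝕜) with hu
        have hu1 : ‖u‖ = 1 := by
          rcases eq_or_ne (c a) 0 with h | h
          · simp [hu, h]
          · rw [hu, if_neg h, norm_div, RCLike.norm_ofReal,
              abs_of_nonneg hθ0, div_self (norm_ne_zero_iff.mpr h)]
        have hca : c a = ((θ : ℝ) : 𝕜) * u := by
          rcases eq_or_ne (c a) 0 with h | h
          · rw [hu, if_pos h, h, mul_one]
            rw [hθ, h]; simp
          · have hθne : ((θ : ℝ) : 𝕜) ≠ 0 := by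
              exact_mod_cast norm_ne_zero_iff.mpr h
            rw [hu, if_neg h]
            field_simp
        set l : ℝ := (t + θ) / (2 * t) with hl
        have hl0 : 0 ≤ l := by positivity
        have hl1 : l ≤ 1 := by
          rw [hl, div_le_one (by linarith)]; linarith
        set a₁ : 𝕜 := ((l : ℝ) : 𝕜) with ha₁
        set a₂ : 𝕜 := 1 - a₁ with ha₂
        have ha12 : a₁ + a₂ = 1 := by rw [ha₂]; ring
        have hco : a₁ * ((t:𝕜) * u) + a₂ * ((t:𝕜) * (-u)) = c a := by
          have hre : (2*l - 1) * t = θ := by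
            rw [hl]; field_simp; ring
          have hreK : ((2*l - 1 : ℝ) : 𝕜) * ((t:ℝ):𝕜) = ((θ:ℝ):𝕜) := by
            rw [← RCLike.ofReal_mul, hre]
          rw [hca, ha₂, ha₁]
          push_cast at hreK ⊢
          linear_combination u * hreK
        have hid : W + c a • Bs.e a
            = a₁ • (W + ((t:𝕜) * u) • Bs.e a) + a₂ • (W + ((t:𝕜) * (-u)) • Bs.e a) := by
          calc W + c a • Bs.e a
              = (a₁ + a₂) • W + (a₁ * ((t:𝕜) * u) + a₂ * ((t:𝕜) * (-u))) • Bs.e a := by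
                rw [hco, ha12, one_smul]
            _ = _ := by
                simp only [smul_add, add_smul, mul_smul]
                abel
        have hna₁ : ‖a₁‖ = l := by
          rw [ha₁, RCLike.norm_ofReal, abs_of_nonneg hl0]
        have hna₂ : ‖a₂‖ = 1 - l := by
          have : a₂ = ((1 - l : ℝ) : 𝕜) := by rw [ha₂, ha₁]; push_cast; ring
          rw [this, RCLike.norm_ofReal, abs_of_nonneg (by linarith)]
        have hbound : ∀ z₁ z₂ : X, W + c a • Bs.e a = a₁ • z₁ + a₂ • z₂ →
            ‖W + c a • Bs.e a‖ ≤ l * ‖z₁‖ + (1 - l) * ‖z₂‖ := by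
          intro z₁ z₂ hz
          rw [hz]
          refine (norm_add_le _ _).trans ?_
          rw [norm_smul, norm_smul, hna₁, hna₂]
        rcases le_total ‖W + ((t:𝕜) * u) • Bs.e a‖ ‖W + ((t:𝕜) * (-u)) • Bs.e a‖ with hle | hle
        · refine ⟨-u, by simpa using hu1, ?_⟩
          have h1 := hbound _ _ hid
          have h2 : l * ‖W + ((t:𝕜) * u) • Bs.e a‖ ≤ l * ‖W + ((t:𝕜) * (-u)) • Bs.e a‖ :=
            mul_le_mul_of_nonneg_left hle hl0
          calc ‖W + c a • Bs.e a‖ ≤ _ := h1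
            _ ≤ ‖W + ((t:𝕜) * (-u)) • Bs.e a‖ := by nlinarith [norm_nonneg (W + ((t:𝕜) * (-u)) • Bs.e a)]
        · refine ⟨u, hu1, ?_⟩
          have h1 := hbound _ _ hid
          calc ‖W + c a • Bs.e a‖ ≤ _ := h1
            _ ≤ ‖W + ((t:𝕜) * u) • Bs.e a‖ := by nlinarith [norm_nonneg (W + ((t:𝕜) * u) • Bs.e a)]
    obtain ⟨μ, hμ1, hμ⟩ := key
    refine ⟨fun n => if n = a then μ else ε₀ n, ?_, ?_⟩
    · intro n
      by_cases h : n = a <;> simp [h, hμ1, hε₀ n]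
    · have hs1 : ∑ n ∈ insert a s, c n • Bs.e n = c a • Bs.e a + ∑ n ∈ s, c n • Bs.e n :=
        Finset.sum_insert ha
      have hs2 : ∑ n ∈ insert a s, ((t:𝕜) * (if n = a then μ else ε₀ n)) • Bs.e n
          = ((t:𝕜) * μ) • Bs.e a + ∑ n ∈ s, ((t:𝕜) * ε₀ n) • Bs.e n := by
        rw [Finset.sum_insert ha, if_pos rfl]
        congr 1
        refine Finset.sum_congr rfl fun n hn => ?_
        have hna : n ≠ a := by rintro rfl; exact ha hn
        rw [if_neg hna]
      rw [hs1, hs2]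
      calc ‖w + (c a • Bs.e a + ∑ n ∈ s, c n • Bs.e n)‖
          = ‖(w + c a • Bs.e a) + ∑ n ∈ s, c n • Bs.e n‖ := by rw [add_assoc]
        _ ≤ ‖(w + c a • Bs.e a) + ∑ n ∈ s, ((t:𝕜) * ε₀ n) • Bs.e n‖ := h₀
        _ = ‖W + c a • Bs.e a‖ := by rw [hW]; congr 1; abel
        _ ≤ ‖W + ((t:𝕜) * μ) • Bs.e a‖ := hμ
        _ = _ := by rw [hW]; congr 1; abel

end StmtSix
end Aux2
section Aux3
namespace StmtSix

variable {𝕜 X : Type*} [RCLike 𝕜] [NormedAddCommGroup X] [NormedSpace 𝕜 X]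
variable (Bs : BasisOf 𝕜 X)

lemma abel_bound (y u : X) (K : ℝ≥0∞) (S : Finset ℕ) :
    S.Nonempty → (∀ b ∈ S, Bs.coord b y ≠ 0) →
    (∀ S' ⊆ S, S' ≠ S →
       (∀ b ∈ S', ∀ d ∈ S, d ∉ S' → ‖Bs.coord d y‖ ≤ ‖Bs.coord b y‖) →
       (‖u - Bs.proj S' y‖₊ : ℝ≥0∞) ≤ K) →
    ∀ t : ℝ, (∀ b ∈ S, t ≤ ‖Bs.coord b y‖) → (∃ b ∈ S, ‖Bs.coord b y‖ = t) →
    (‖u - Bs.proj S y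
        + ∑ b ∈ S, ((t : 𝕜) * (Bs.coord b y / ((‖Bs.coord b y‖ : ℝ) : 𝕜))) • Bs.e b‖₊ : ℝ≥0∞)
      ≤ K := by
  induction S using Finset.strongInduction with
  | _ S IH =>
    rintro hne hc H t ht ⟨b₀, hb₀S, hb₀⟩
    set g : ℝ → ℕ → X := fun s b => ((s : 𝕜) * (Bs.coord b y / ((‖Bs.coord b y‖ : ℝ) : 𝕜))) • Bs.e b
      with hg
    set S' := S.erase b₀ with hS'
    have hS'sub : S' ⊆ S := Finset.erase_subset _ _
    have hb₀notS' : b₀ ∉ S' := Finset.notMem_erase _ _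
    have hS'ne_S : S' ≠ S := fun h => hb₀notS' (h ▸ hb₀S)
    have hsum : ∀ s : ℝ, ∑ b ∈ S, g s b = g s b₀ + ∑ b ∈ S', g s b :=
      fun s => (Finset.add_sum_erase S (g s) hb₀S).symm
    have hproj : Bs.proj S y = Bs.coord b₀ y • Bs.e b₀ + Bs.proj S' y :=
      (Finset.add_sum_erase S _ hb₀S).symm
    have hcb₀ : Bs.coord b₀ y ≠ 0 := hc b₀ hb₀S
    have hterm : g t b₀ = Bs.coord b₀ y • Bs.e b₀ := by
      rw [hg]
      have h0 : ((‖Bs.coord b₀ y‖ : ℝ) : 𝕜) ≠ 0 := by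
        exact_mod_cast norm_ne_zero_iff.mpr hcb₀
      rw [← hb₀]
      field_simp
    rcases S'.eq_empty_or_nonempty with hS'e | hS'ne
    · have heq : u - Bs.proj S y + ∑ b ∈ S, g t b = u - Bs.proj (∅ : Finset ℕ) y := by
        rw [hsum t, hterm, hproj, hS'e]
        simp only [Finset.sum_empty, BasisOf.proj, add_zero, sub_zero]
        abel
      rw [heq]
      exact H ∅ (Finset.empty_subset _) (Ne.symm hne.ne_empty) (by simp)
    · obtain ⟨b₁, hb₁S', hb₁min⟩ := S'.exists_min_image (fun b => ‖Bs.coord b y‖) hS'ne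
      set t₁ := ‖Bs.coord b₁ y‖ with ht₁
      have ht0pos : 0 < t := by
        rw [← hb₀]
        exact norm_pos_iff.mpr hcb₀
      have htt₁ : t ≤ t₁ := ht b₁ (hS'sub hb₁S')
      have ht₁pos : 0 < t₁ := lt_of_lt_of_le ht0pos htt₁
      set l : ℝ := t / t₁ with hl
      have hl0 : 0 ≤ l := by positivity
      have hl1 : l ≤ 1 := by rw [hl, div_le_one ht₁pos]; exact htt₁
      have hscale : ∑ b ∈ S', g t b = ((l : ℝ) : 𝕜) • ∑ b ∈ S', g t₁ b := by
        rw [Finset.smul_sum]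
        refine Finset.sum_congr rfl fun b hb => ?_
        rw [hg]
        simp only
        rw [smul_smul]
        congr 1
        have hcast : ((t : ℝ) : 𝕜) = ((l : ℝ) : 𝕜) * ((t₁ : ℝ) : 𝕜) := by
          rw [← RCLike.ofReal_mul]
          congr 1
          rw [hl]
          field_simp
        rw [hcast]; ring
      have hidentity : u - Bs.proj S y + ∑ b ∈ S, g t b
          = ((l : ℝ) : 𝕜) • (u - Bs.proj S' y + ∑ b ∈ S', g t₁ b)
            + ((1 : 𝕜) - ((l : ℝ) : 𝕜)) • (u - Bs.proj S' y) := by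
        rw [hsum t, hterm, hproj, hscale]
        simp only [smul_add, smul_sub, sub_smul, one_smul]
        abel
      have hIH : (‖u - Bs.proj S' y + ∑ b ∈ S', g t₁ b‖₊ : ℝ≥0∞) ≤ K := by
        refine IH S' (Finset.erase_ssubset hb₀S) hS'ne
          (fun b hb => hc b (hS'sub hb)) ?_ t₁ (fun b hb => hb₁min b hb) ⟨b₁, hb₁S', rfl⟩
        intro S'' hsub hne'' hslice
        refine H S'' (hsub.trans hS'sub) ?_ ?_
        · intro h
          subst h
          exact hb₀notS' (hsub hb₀S)
        · intro b hb d hd hdnot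
          rcases eq_or_ne d b₀ with rfl | hdb
          · calc ‖Bs.coord d y‖ = t := hb₀
              _ ≤ ‖Bs.coord b y‖ := ht b (hS'sub (hsub hb))
          · exact hslice b hb d (Finset.mem_erase.mpr ⟨hdb, hd⟩) hdnot
      have hH' : (‖u - Bs.proj S' y‖₊ : ℝ≥0∞) ≤ K := by
        refine H S' hS'sub hS'ne_S ?_
        intro b hb d hdS hdn
        have hd : d = b₀ := by
          by_contra hdb
          exact hdn (Finset.mem_erase.mpr ⟨hdb, hdS⟩)
        subst hd
        calc ‖Bs.coord d y‖ = t := hb₀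
          _ ≤ ‖Bs.coord b y‖ := ht b (hS'sub hb)
      rw [hidentity]
      have hcast₂ : ((1 : 𝕜) - ((l : ℝ) : 𝕜)) = (((1 - l : ℝ) : ℝ) : 𝕜) := by push_cast; ring
      calc (‖((l : ℝ) : 𝕜) • (u - Bs.proj S' y + ∑ b ∈ S', g t₁ b)
              + ((1 : 𝕜) - ((l : ℝ) : 𝕜)) • (u - Bs.proj S' y)‖₊ : ℝ≥0∞)
          ≤ (‖((l : ℝ) : 𝕜) • (u - Bs.proj S' y + ∑ b ∈ S', g t₁ b)‖₊ : ℝ≥0∞)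
            + ‖((1 : 𝕜) - ((l : ℝ) : 𝕜)) • (u - Bs.proj S' y)‖₊ := by
              exact_mod_cast nnnorm_add_le _ _
        _ = ENNReal.ofReal l * ‖u - Bs.proj S' y + ∑ b ∈ S', g t₁ b‖₊
            + ENNReal.ofReal (1 - l) * ‖u - Bs.proj S' y‖₊ := by
              rw [nnnorm_smul, hcast₂, nnnorm_smul]
              rw [ENNReal.coe_mul, ENNReal.coe_mul]
              rw [coe_nnnorm_ofReal l hl0, coe_nnnorm_ofReal (1 - l) (by linarith)]
        _ ≤ ENNReal.ofReal l * K + ENNReal.ofReal (1 - l) * K := by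
              gcongr
        _ = K := by
              rw [← add_mul, ← ENNReal.ofReal_add hl0 (by linarith)]
              simp

end StmtSix
end Aux3
section Aux4
namespace StmtSix

open scoped ENNReal

variable {𝕜 X : Type*} [RCLike 𝕜] [NormedAddCommGroup X] [NormedSpace 𝕜 X]
variable (Bs : BasisOf 𝕜 X)

lemma coe_nnnorm_ne_zero {z : X} (hz : z ≠ 0) : (‖z‖₊ : ℝ≥0∞) ≠ 0 :=
  ENNReal.coe_ne_zero.mpr (nnnorm_ne_zero_iff.mpr hz)

lemma mul_of_div_le {a b c : ℝ≥0∞} (hb : b ≠ 0) (hbt : b ≠ ⊤) (h : a / b ≤ c) : a ≤ c * b :=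
  (ENNReal.div_le_iff_le_mul (Or.inl hb) (Or.inl hbt)).mp h

lemma gc_bound (m : ℕ) (x : X) (hx : x ≠ 0) (A : Finset ℕ) (hA : A.card ≤ m)
    (hg : Bs.IsGreedySet x A) :
    (‖x - Bs.proj A x‖₊ : ℝ≥0∞) ≤ Bs.gc m * ‖x‖₊ := by
  refine mul_of_div_le (coe_nnnorm_ne_zero hx) ENNReal.coe_ne_top ?_
  unfold BasisOf.gc
  exact le_iSup_of_le x (le_iSup_of_le hx (le_iSup_of_le A (le_iSup_of_le hA
    (le_iSup_of_le hg le_rfl))))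

lemma gtilde_bound (m : ℕ) (x : X) (hx : x ≠ 0) (A A' : Finset ℕ) (hAA : A ⊆ A')
    (hlt : A.card < A'.card) (hA' : A'.card ≤ m)
    (hgA : Bs.IsGreedySet x A) (hgA' : Bs.IsGreedySet x A') :
    (‖Bs.proj A' x - Bs.proj A x‖₊ : ℝ≥0∞) ≤ Bs.gtilde m * ‖x‖₊ := by
  refine mul_of_div_le (coe_nnnorm_ne_zero hx) ENNReal.coe_ne_top ?_
  unfold BasisOf.gtilde
  exact le_iSup_of_le x (le_iSup_of_le hx (le_iSup_of_le A (le_iSup_of_le A'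
    (le_iSup_of_le hAA (le_iSup_of_le hlt (le_iSup_of_le hA' (le_iSup_of_le hgA
      (le_iSup_of_le hgA' le_rfl))))))))

lemma sc_bound (seq : ℕ → ℕ) (m : ℕ) (A D : Finset ℕ) (hT : TPair seq A D)
    (hD : D.card ≤ m) (hA : ∀ a ∈ A, a ≤ seq (m - 1))
    (ε δ : ℕ → 𝕜) (hε : ∀ n, ‖ε n‖ = 1) (hδ : ∀ n, ‖δ n‖ = 1)
    (hDne : Bs.sgnSum δ D ≠ 0) :
    (‖Bs.sgnSum ε A‖₊ : ℝ≥0∞) ≤ Bs.scParam seq m * ‖Bs.sgnSum δ D‖₊ := by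
  refine mul_of_div_le (coe_nnnorm_ne_zero hDne) ENNReal.coe_ne_top ?_
  unfold BasisOf.scParam
  exact le_iSup_of_le A (le_iSup_of_le D (le_iSup_of_le hT (le_iSup_of_le hD
    (le_iSup_of_le hA (le_iSup_of_le ε (le_iSup_of_le hε (le_iSup_of_le δ
      (le_iSup_of_le hδ le_rfl))))))))

lemma omega_bound (seq : ℕ → ℕ) (m : ℕ) (x : X) (hx : ∀ n, ‖Bs.coord n x‖ ≤ 1)
    (A D : Finset ℕ) (h1 : (↑A : Set ℕ) ⊆ Set.range seq) (h2 : A.card ≤ D.card)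
    (h3 : D.card ≤ m) (h4 : ∀ a ∈ A, a ≤ seq (m - 1)) (h5 : ∀ d ∈ D, Bs.coord d x = 0)
    (h6 : ∀ a ∈ A, ∀ j : ℕ, (j ∈ D ∨ Bs.coord j x ≠ 0) → j ∈ Set.range seq → a < j)
    (ε : ℕ → 𝕜) (hε : ∀ n, ‖ε n‖ = 1) (δ : ℕ → 𝕜) (hδ : ∀ n, ‖δ n‖ = 1)
    (hDne : x + Bs.sgnSum δ D ≠ 0) :
    (‖x + Bs.sgnSum ε A‖₊ : ℝ≥0∞) ≤ Bs.omegaParam seq m * ‖x + Bs.sgnSum δ D‖₊ := by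
  refine mul_of_div_le (coe_nnnorm_ne_zero hDne) ENNReal.coe_ne_top ?_
  unfold BasisOf.omegaParam
  exact le_iSup_of_le x (le_iSup_of_le hx (le_iSup_of_le A (le_iSup_of_le D
    (le_iSup_of_le h1 (le_iSup_of_le h2 (le_iSup_of_le h3 (le_iSup_of_le h4
      (le_iSup_of_le h5 (le_iSup_of_le h6 (le_iSup_of_le ε (le_iSup_of_le hε
        (le_iSup_of_le δ (le_iSup_of_le hδ le_rfl)))))))))))))

lemma one_le_gc (m : ℕ) : 1 ≤ Bs.gc m := by
  have he : Bs.e 0 ≠ 0 := e_ne_zero Bs 0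
  unfold BasisOf.gc
  refine le_iSup_of_le (Bs.e 0) (le_iSup_of_le he (le_iSup_of_le ∅ (le_iSup_of_le
    (by simp) (le_iSup_of_le (greedy_empty Bs _) ?_))))
  rw [proj_empty, sub_zero, ENNReal.div_self (coe_nnnorm_ne_zero he) ENNReal.coe_ne_top]

lemma coord_e_le_one (n : ℕ) : ‖Bs.coord n (Bs.e 0)‖ ≤ 1 := by
  rw [Bs.biorth n 0]
  split <;> simp

lemma sgnSum_empty (ε : ℕ → 𝕜) : Bs.sgnSum ε (∅ : Finset ℕ) = 0 := Finset.sum_empty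

lemma one_le_omega (seq : ℕ → ℕ) (m : ℕ) : 1 ≤ Bs.omegaParam seq m := by
  have he : Bs.e 0 ≠ 0 := e_ne_zero Bs 0
  unfold BasisOf.omegaParam
  refine le_iSup_of_le (Bs.e 0) (le_iSup_of_le (coord_e_le_one Bs) (le_iSup_of_le ∅
    (le_iSup_of_le ∅ (le_iSup_of_le (by simp) (le_iSup_of_le le_rfl (le_iSup_of_le
      (Nat.zero_le m) (le_iSup_of_le (by simp) (le_iSup_of_le (by simp) (le_iSup_of_le
        (by simp) (le_iSup_of_le (fun _ => 1) (le_iSup_of_le (fun _ => norm_one)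
          (le_iSup_of_le (fun _ => 1) (le_iSup_of_le (fun _ => norm_one) ?_)))))))))))))
  rw [sgnSum_empty, add_zero,
    ENNReal.div_self (coe_nnnorm_ne_zero he) ENNReal.coe_ne_top]

lemma kappa_ge (j k : ℕ) : ((‖Bs.e j‖₊ * ‖Bs.coord k‖₊ : ℝ≥0) : ℝ≥0∞) ≤ Bs.kappa := by
  unfold BasisOf.kappa
  exact le_iSup_of_le j (le_iSup_of_le k le_rfl)

lemma mem_N_le_seq (seq : ℕ → ℕ) (hseq : StrictMono seq) {a k m : ℕ} (hk : k ≤ m)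
    (ha : a ∈ (Finset.range k).image seq) : a ≤ seq (m - 1) := by
  obtain ⟨i, hi, rfl⟩ := Finset.mem_image.mp ha
  rw [Finset.mem_range] at hi
  exact hseq.monotone (by omega)

lemma lt_of_notMem_N (seq : ℕ → ℕ) (hseq : StrictMono seq) {a j k : ℕ}
    (ha : a ∈ (Finset.range k).image seq) (hj : j ∈ Set.range seq)
    (hjN : j ∉ (Finset.range k).image seq) : a < j := by
  obtain ⟨i, hi, rfl⟩ := Finset.mem_image.mp ha
  rw [Finset.mem_range] at hi
  obtain ⟨i', rfl⟩ := hj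
  have hik : ¬ i' < k := fun h => hjN (Finset.mem_image.mpr ⟨i', Finset.mem_range.mpr h, rfl⟩)
  exact hseq (by omega)

lemma N_subset_range (seq : ℕ → ℕ) (k : ℕ) :
    (↑((Finset.range k).image seq) : Set ℕ) ⊆ Set.range seq := by
  intro a ha
  simp only [Finset.coe_image, Set.mem_image] at ha
  obtain ⟨i, _, rfl⟩ := ha
  exact ⟨i, rfl⟩

lemma lhat_le_of (seq : ℕ → ℕ) (hseq : StrictMono seq) (m : ℕ) (C : ℝ≥0∞)
    (h : ∀ x : X, ∀ A : Finset ℕ, A.card = m → Bs.IsGreedySet x A → ∀ k : ℕ, k ≤ m →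
      x - Bs.proj ((Finset.range k).image seq) x ≠ 0 →
      (‖x - Bs.proj A x‖₊ : ℝ≥0∞)
        ≤ C * ‖x - Bs.proj ((Finset.range k).image seq) x‖₊) :
    Bs.Lhat seq m ≤ C := by
  refine sInf_le ?_
  intro x A hcard hg k hk
  rw [projSeq_eq Bs seq hseq]
  rcases eq_or_ne (x - Bs.proj ((Finset.range k).image seq) x) 0 with h0 | h0
  · have hxN : x = Bs.proj ((Finset.range k).image seq) x := by
      rwa [sub_eq_zero] at h0
    have hNcard : ((Finset.range k).image seq).card ≤ A.card := by
      rw [Finset.card_image_of_injective _ hseq.injective, Finset.card_range, hcard]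
      exact hk
    have hxA : x = Bs.proj A x := proj_self_of_eq Bs x A _ hxN hNcard hg
    rw [← hxA, sub_self]
    simp
  · exact h x A hcard hg k hk h0

end StmtSix
end Aux4
section Aux5
namespace StmtSix

open scoped ENNReal

variable {𝕜 X : Type*} [RCLike 𝕜] [NormedAddCommGroup X] [NormedSpace 𝕜 X]
variable (Bs : BasisOf 𝕜 X)

lemma part1 (seq : ℕ → ℕ) (hseq : StrictMono seq) (m : ℕ) :
    Bs.Lhat seq m ≤ 1 + 2 * Bs.kappa * (m : ℝ≥0∞) := by
  refine lhat_le_of Bs seq hseq m _ ?_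
  intro x A hcard hg k hk hy0
  set N := (Finset.range k).image seq with hN
  set y := x - Bs.proj N x with hy
  have hNcard : N.card = k := by
    rw [hN, Finset.card_image_of_injective _ hseq.injective, Finset.card_range]
  have hrw := decomp Bs x A N
  rw [← hy] at hrw
  rw [hrw]
  have hterm1 : (‖Bs.proj (A \ N) y‖₊ : ℝ≥0∞) ≤ (m : ℝ≥0∞) * (Bs.kappa * ‖y‖₊) := by
    unfold BasisOf.proj
    refine le_trans (show (‖∑ n ∈ A \ N, Bs.coord n y • Bs.e n‖₊ : ℝ≥0∞)
        ≤ ∑ n ∈ A \ N, (‖Bs.coord n y • Bs.e n‖₊ : ℝ≥0∞) by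
      exact_mod_cast nnnorm_sum_le (A \ N) (fun n => Bs.coord n y • Bs.e n)) ?_
    have hstep : ∀ n ∈ A \ N, (‖Bs.coord n y • Bs.e n‖₊ : ℝ≥0∞) ≤ Bs.kappa * ‖y‖₊ := by
      intro n hn
      rw [nnnorm_smul]
      push_cast
      calc (‖Bs.coord n y‖₊ : ℝ≥0∞) * ‖Bs.e n‖₊
          ≤ ((‖Bs.coord n‖₊ : ℝ≥0∞) * ‖y‖₊) * ‖Bs.e n‖₊ := by
            gcongr
            exact_mod_cast (Bs.coord n).le_opNorm y
        _ = ((‖Bs.e n‖₊ * ‖Bs.coord n‖₊ : ℝ≥0) : ℝ≥0∞) * ‖y‖₊ := by push_cast; ring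
        _ ≤ Bs.kappa * ‖y‖₊ := by gcongr; exact kappa_ge Bs n n
    calc ∑ n ∈ A \ N, (‖Bs.coord n y • Bs.e n‖₊ : ℝ≥0∞)
        ≤ (A \ N).card • (Bs.kappa * ‖y‖₊) := Finset.sum_le_card_nsmul _ _ _ hstep
      _ = ((A \ N).card : ℝ≥0∞) * (Bs.kappa * ‖y‖₊) := nsmul_eq_mul _ _
      _ ≤ (m : ℝ≥0∞) * (Bs.kappa * ‖y‖₊) := by
          gcongr
          have h1 : (A \ N).card ≤ m := le_trans (Finset.card_le_card Finset.sdiff_subset) hcard.le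
          exact_mod_cast Nat.cast_le.mpr h1
  have hterm2 : (‖Bs.proj (N \ A) x‖₊ : ℝ≥0∞) ≤ (m : ℝ≥0∞) * (Bs.kappa * ‖y‖₊) := by
    rcases (N \ A).eq_empty_or_nonempty with hE | hE
    · rw [hE]
      simp [BasisOf.proj]
    · have hANne : (A \ N).Nonempty := by
        rw [← Finset.card_pos]
        have h1 := card_sdiff_le_card_sdiff A N (by rw [hNcard, hcard]; exact hk)
        have h2 := Finset.card_pos.mpr hE
        omega
      obtain ⟨a₀, ha₀⟩ := hANne
      have ha₀A := (Finset.mem_sdiff.mp ha₀).1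
      have ha₀N := (Finset.mem_sdiff.mp ha₀).2
      have hcoorda₀ : Bs.coord a₀ y = Bs.coord a₀ x := by
        rw [hy, coord_sub_projN, if_neg ha₀N]
      unfold BasisOf.proj
      refine le_trans (show (‖∑ n ∈ N \ A, Bs.coord n x • Bs.e n‖₊ : ℝ≥0∞)
          ≤ ∑ n ∈ N \ A, (‖Bs.coord n x • Bs.e n‖₊ : ℝ≥0∞) by
        exact_mod_cast nnnorm_sum_le (N \ A) (fun n => Bs.coord n x • Bs.e n)) ?_
      have hstep : ∀ n ∈ N \ A, (‖Bs.coord n x • Bs.e n‖₊ : ℝ≥0∞) ≤ Bs.kappa * ‖y‖₊ := by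
        intro n hn
        have hnA := (Finset.mem_sdiff.mp hn).2
        rw [nnnorm_smul]
        push_cast
        calc (‖Bs.coord n x‖₊ : ℝ≥0∞) * ‖Bs.e n‖₊
            ≤ ((‖Bs.coord a₀‖₊ : ℝ≥0∞) * ‖y‖₊) * ‖Bs.e n‖₊ := by
              gcongr
              have h1 : ‖Bs.coord n x‖ ≤ ‖Bs.coord a₀ x‖ := hg a₀ ha₀A n hnA
              have h2 : ‖Bs.coord a₀ x‖ ≤ ‖Bs.coord a₀‖ * ‖y‖ := by
                rw [← hcoorda₀]
                exact (Bs.coord a₀).le_opNorm y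
              exact_mod_cast le_trans h1 h2
          _ = ((‖Bs.e n‖₊ * ‖Bs.coord a₀‖₊ : ℝ≥0) : ℝ≥0∞) * ‖y‖₊ := by push_cast; ring
          _ ≤ Bs.kappa * ‖y‖₊ := by gcongr; exact kappa_ge Bs n a₀
      calc ∑ n ∈ N \ A, (‖Bs.coord n x • Bs.e n‖₊ : ℝ≥0∞)
          ≤ (N \ A).card • (Bs.kappa * ‖y‖₊) := Finset.sum_le_card_nsmul _ _ _ hstep
        _ = ((N \ A).card : ℝ≥0∞) * (Bs.kappa * ‖y‖₊) := nsmul_eq_mul _ _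
        _ ≤ (m : ℝ≥0∞) * (Bs.kappa * ‖y‖₊) := by
            gcongr
            have h1 : (N \ A).card ≤ m := by
              have h2 : (N \ A).card ≤ N.card := Finset.card_le_card Finset.sdiff_subset
              omega
            exact_mod_cast Nat.cast_le.mpr h1
  calc (‖(y - Bs.proj (A \ N) y) + Bs.proj (N \ A) x‖₊ : ℝ≥0∞)
      ≤ (‖y - Bs.proj (A \ N) y‖₊ : ℝ≥0∞) + ‖Bs.proj (N \ A) x‖₊ := by
        exact_mod_cast nnnorm_add_le _ _
    _ ≤ ((‖y‖₊ : ℝ≥0∞) + ‖Bs.proj (A \ N) y‖₊) + ‖Bs.proj (N \ A) x‖₊ := by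
        gcongr
        exact_mod_cast nnnorm_sub_le _ _
    _ ≤ ((‖y‖₊ : ℝ≥0∞) + (m : ℝ≥0∞) * (Bs.kappa * ‖y‖₊)) + (m : ℝ≥0∞) * (Bs.kappa * ‖y‖₊) := by
        gcongr
    _ = (1 + 2 * Bs.kappa * (m : ℝ≥0∞)) * ‖y‖₊ := by ring

end StmtSix
end Aux5
section Aux6
namespace StmtSix

open scoped ENNReal

variable {𝕜 X : Type*} [RCLike 𝕜] [NormedAddCommGroup X] [NormedSpace 𝕜 X]
variable (Bs : BasisOf 𝕜 X)

lemma smul_sgnSum (t : ℝ) (ε : ℕ → 𝕜) (E : Finset ℕ) :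
    ∑ n ∈ E, (((t : ℝ) : 𝕜) * ε n) • Bs.e n = ((t : ℝ) : 𝕜) • Bs.sgnSum ε E := by
  rw [BasisOf.sgnSum, Finset.smul_sum]
  exact Finset.sum_congr rfl fun n _ => (smul_smul _ _ _).symm

lemma part2 (seq : ℕ → ℕ) (hseq : StrictMono seq) (m : ℕ) :
    Bs.Lhat seq m ≤ Bs.gc m + Bs.gtilde m * Bs.scParam seq m := by
  refine lhat_le_of Bs seq hseq m _ ?_
  intro x A hcard hg k hk hy0
  set N := (Finset.range k).image seq with hN
  set y := x - Bs.proj N x with hy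
  have hNcard : N.card = k := by
    rw [hN, Finset.card_image_of_injective _ hseq.injective, Finset.card_range]
  have hrw := decomp Bs x A N
  rw [← hy] at hrw
  rw [hrw]
  have hANcard : (A \ N).card ≤ m := le_trans (Finset.card_le_card Finset.sdiff_subset) hcard.le
  have hANgreedy : Bs.IsGreedySet y (A \ N) := by
    rw [hy]
    exact greedy_slice Bs x A N hg (A \ N) (subset_refl _) (fun b hb d hd hdn => absurd hd hdn)
  have hterm1 : (‖y - Bs.proj (A \ N) y‖₊ : ℝ≥0∞) ≤ Bs.gc m * ‖y‖₊ :=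
    gc_bound Bs m y hy0 (A \ N) hANcard hANgreedy
  have hterm2 : (‖Bs.proj (N \ A) x‖₊ : ℝ≥0∞)
      ≤ Bs.gtilde m * Bs.scParam seq m * ‖y‖₊ := by
    rcases (N \ A).eq_empty_or_nonempty with hE | hE
    · rw [hE]
      simp [BasisOf.proj]
    · have hANne : (A \ N).Nonempty := by
        rw [← Finset.card_pos]
        have h1 := card_sdiff_le_card_sdiff A N (by rw [hNcard, hcard]; exact hk)
        have h2 := Finset.card_pos.mpr hE
        omega
      obtain ⟨b₀, hb₀, hb₀min⟩ := (A \ N).exists_min_image (fun b => ‖Bs.coord b y‖) hANne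
      set t := ‖Bs.coord b₀ y‖ with htdef
      have hb₀A := (Finset.mem_sdiff.mp hb₀).1
      have hcoordy : ∀ b ∈ A \ N, Bs.coord b y = Bs.coord b x := fun b hb => by
        rw [hy, coord_sub_projN, if_neg (Finset.mem_sdiff.mp hb).2]
      have hEbound : ∀ n ∈ N \ A, ‖Bs.coord n x‖ ≤ t := by
        intro n hn
        have hnA := (Finset.mem_sdiff.mp hn).2
        calc ‖Bs.coord n x‖ ≤ ‖Bs.coord b₀ x‖ := hg b₀ hb₀A n hnA
          _ = t := by rw [htdef, hcoordy b₀ hb₀]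
      rcases eq_or_lt_of_le (norm_nonneg (Bs.coord b₀ y)) with ht0 | htpos
      · rw [← htdef] at ht0
        have hzero : Bs.proj (N \ A) x = 0 := by
          refine Finset.sum_eq_zero fun n hn => ?_
          have h1 := hEbound n hn
          rw [← ht0] at h1
          rw [norm_le_zero_iff.mp h1, zero_smul]
        rw [hzero]
        simp
      · rw [← htdef] at htpos
        have hcne : ∀ b ∈ A \ N, Bs.coord b y ≠ 0 := by
          intro b hb h0
          have h1 := hb₀min b hb
          rw [h0, norm_zero] at h1
          linarith
        obtain ⟨ε, hε, hsig⟩ :=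
          exists_sign Bs t htpos.le (fun n => Bs.coord n x) (N \ A) 0 hEbound
        set δ : ℕ → 𝕜 := fun n =>
          if Bs.coord n y = 0 then 1 else Bs.coord n y / ((‖Bs.coord n y‖ : ℝ) : 𝕜) with hδdef
        have hδ1 : ∀ n, ‖δ n‖ = 1 := by
          intro n
          rw [hδdef]
          simp only
          split
          · exact norm_one
          · next h =>
              rw [norm_div, RCLike.norm_ofReal, abs_of_nonneg (norm_nonneg _),
                div_self (norm_ne_zero_iff.mpr h)]
        have habel : (‖((t : ℝ) : 𝕜) • Bs.sgnSum δ (A \ N)‖₊ : ℝ≥0∞)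
            ≤ Bs.gtilde m * ‖y‖₊ := by
          have hf : ((t : ℝ) : 𝕜) • Bs.sgnSum δ (A \ N)
              = Bs.proj (A \ N) y - Bs.proj (A \ N) y
                + ∑ b ∈ A \ N,
                    (((t : ℝ) : 𝕜) * (Bs.coord b y / ((‖Bs.coord b y‖ : ℝ) : 𝕜))) • Bs.e b := by
            rw [sub_self, zero_add, ← smul_sgnSum]
            refine Finset.sum_congr rfl fun b hb => ?_
            congr 2
            rw [hδdef]
            simp only
            rw [if_neg (hcne b hb)]
          rw [hf]
          refine abel_bound Bs y (Bs.proj (A \ N) y) _ (A \ N) hANne hcne ?_ t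
            (fun b hb => hb₀min b hb) ⟨b₀, hb₀, rfl⟩
          intro S' hsub hne hslice
          have hgS' : Bs.IsGreedySet y S' := by
            rw [hy]
            refine greedy_slice Bs x A N hg S' hsub ?_
            intro b hb d hd hdn
            have := hslice b hb d hd hdn
            rwa [hy] at this
          have hcardlt : S'.card < (A \ N).card :=
            Finset.card_lt_card (hsub.ssubset_of_ne hne)
          exact gtilde_bound Bs m y hy0 S' (A \ N) hsub hcardlt hANcard hgS' hANgreedy
        have hsc : (‖Bs.sgnSum ε (N \ A)‖₊ : ℝ≥0∞)
            ≤ Bs.scParam seq m * ‖Bs.sgnSum δ (A \ N)‖₊ := by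
          refine sc_bound Bs seq m (N \ A) (A \ N) ⟨?_, ?_, ?_⟩ hANcard ?_ ε δ hε hδ1 ?_
          · intro a ha
            have haN : a ∈ N := (Finset.mem_sdiff.mp (Finset.mem_coe.mp ha)).1
            exact N_subset_range seq k (Finset.mem_coe.mpr haN)
          · exact card_sdiff_le_card_sdiff A N (by rw [hNcard, hcard]; exact hk)
          · intro a ha d hd hdr
            have haN : a ∈ N := (Finset.mem_sdiff.mp ha).1
            have hdN : d ∉ N := (Finset.mem_sdiff.mp hd).2
            exact lt_of_notMem_N seq hseq haN hdr hdN
          · intro a ha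
            exact mem_N_le_seq seq hseq hk (Finset.mem_sdiff.mp ha).1
          · intro h0
            have h1 : Bs.coord b₀ (Bs.sgnSum δ (A \ N)) = δ b₀ := by
              rw [coord_sgnSum, if_pos hb₀]
            rw [h0, map_zero] at h1
            have h2 := hδ1 b₀
            rw [← h1, norm_zero] at h2
            exact one_ne_zero h2.symm
        calc (‖Bs.proj (N \ A) x‖₊ : ℝ≥0∞)
            = ‖(0 : X) + ∑ n ∈ N \ A, Bs.coord n x • Bs.e n‖₊ := by rw [zero_add]; rfl
          _ ≤ (‖(0 : X) + ∑ n ∈ N \ A, (((t : ℝ) : 𝕜) * ε n) • Bs.e n‖₊ : ℝ≥0∞) := by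
              exact_mod_cast hsig
          _ = ‖((t : ℝ) : 𝕜) • Bs.sgnSum ε (N \ A)‖₊ := by rw [zero_add, smul_sgnSum]
          _ = (‖((t : ℝ) : 𝕜)‖₊ : ℝ≥0∞) * ‖Bs.sgnSum ε (N \ A)‖₊ := by
              rw [nnnorm_smul]; push_cast; ring
          _ ≤ (‖((t : ℝ) : 𝕜)‖₊ : ℝ≥0∞) * (Bs.scParam seq m * ‖Bs.sgnSum δ (A \ N)‖₊) := by
              gcongr
          _ = Bs.scParam seq m * ((‖((t : ℝ) : 𝕜)‖₊ : ℝ≥0∞) * ‖Bs.sgnSum δ (A \ N)‖₊) := by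
              ring
          _ = Bs.scParam seq m * ‖((t : ℝ) : 𝕜) • Bs.sgnSum δ (A \ N)‖₊ := by
              rw [nnnorm_smul]; push_cast; ring
          _ ≤ Bs.scParam seq m * (Bs.gtilde m * ‖y‖₊) := by gcongr
          _ = Bs.gtilde m * Bs.scParam seq m * ‖y‖₊ := by ring
  calc (‖(y - Bs.proj (A \ N) y) + Bs.proj (N \ A) x‖₊ : ℝ≥0∞)
      ≤ (‖y - Bs.proj (A \ N) y‖₊ : ℝ≥0∞) + ‖Bs.proj (N \ A) x‖₊ := by
        exact_mod_cast nnnorm_add_le _ _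
    _ ≤ Bs.gc m * ‖y‖₊ + Bs.gtilde m * Bs.scParam seq m * ‖y‖₊ := add_le_add hterm1 hterm2
    _ = (Bs.gc m + Bs.gtilde m * Bs.scParam seq m) * ‖y‖₊ := by ring

end StmtSix
end Aux6
section Aux7
namespace StmtSix

open scoped ENNReal

variable {𝕜 X : Type*} [RCLike 𝕜] [NormedAddCommGroup X] [NormedSpace 𝕜 X]
variable (Bs : BasisOf 𝕜 X)

lemma part3 (seq : ℕ → ℕ) (hseq : StrictMono seq) (m : ℕ) (hm : 1 ≤ m) :
    Bs.Lhat seq m ≤ Bs.gc (m - 1) * Bs.omegaParam seq m := by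
  refine lhat_le_of Bs seq hseq m _ ?_
  intro x A hcard hg k hk hy0
  set N := (Finset.range k).image seq with hN
  set y := x - Bs.proj N x with hy
  have hNcard : N.card = k := by
    rw [hN, Finset.card_image_of_injective _ hseq.injective, Finset.card_range]
  have hrw := decomp Bs x A N
  rw [← hy] at hrw
  have homega1 : 1 ≤ Bs.omegaParam seq m := one_le_omega Bs seq m
  have hANcard : (A \ N).card ≤ m := le_trans (Finset.card_le_card Finset.sdiff_subset) hcard.le
  rcases (A \ N).eq_empty_or_nonempty with hANe | hANne
  · have hAN : A ⊆ N := Finset.sdiff_eq_empty_iff_subset.mp hANe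
    have hA_eq : A = N :=
      Finset.eq_of_subset_of_card_le hAN (by rw [hNcard, hcard]; exact hk)
    rw [hA_eq, ← hy]
    calc (‖y‖₊ : ℝ≥0∞) = 1 * ‖y‖₊ := (one_mul _).symm
      _ ≤ Bs.gc (m - 1) * Bs.omegaParam seq m * ‖y‖₊ := by
          gcongr
          calc (1 : ℝ≥0∞) = 1 * 1 := (one_mul _).symm
            _ ≤ _ := mul_le_mul' (one_le_gc Bs (m - 1)) homega1
  · obtain ⟨b₀, hb₀, hb₀min⟩ := (A \ N).exists_min_image (fun b => ‖Bs.coord b y‖) hANne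
    set t := ‖Bs.coord b₀ y‖ with htdef
    have hb₀A := (Finset.mem_sdiff.mp hb₀).1
    have hcoordy : ∀ b ∈ A \ N, Bs.coord b y = Bs.coord b x := fun b hb => by
      rw [hy, coord_sub_projN, if_neg (Finset.mem_sdiff.mp hb).2]
    have houtA : ∀ n, n ∉ A → ‖Bs.coord n x‖ ≤ t := by
      intro n hn
      calc ‖Bs.coord n x‖ ≤ ‖Bs.coord b₀ x‖ := hg b₀ hb₀A n hn
        _ = t := by rw [htdef, hcoordy b₀ hb₀]
    rcases eq_or_lt_of_le (norm_nonneg (Bs.coord b₀ y)) with ht0 | htpos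
    · rw [← htdef] at ht0
      have hcoordb₀0 : Bs.coord b₀ y = 0 := by
        rw [← norm_eq_zero, ← htdef, ← ht0]
      have hzeroE : Bs.proj (N \ A) x = 0 := by
        refine Finset.sum_eq_zero fun n hn => ?_
        have h1 := houtA n (Finset.mem_sdiff.mp hn).2
        rw [← ht0] at h1
        rw [norm_le_zero_iff.mp h1, zero_smul]
      set S' := (A \ N).erase b₀ with hS'
      have hproj' : Bs.proj (A \ N) y = Bs.proj S' y :=
        (Finset.sum_erase _ (by rw [hcoordb₀0, zero_smul])).symm
      have heq : x - Bs.proj A x = y - Bs.proj S' y := by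
        rw [hrw, hzeroE, add_zero, hproj']
      rw [heq]
      have hgS' : Bs.IsGreedySet y S' := by
        rw [hy]
        refine greedy_slice Bs x A N hg S' (Finset.erase_subset _ _) ?_
        intro b hb d hd hdn
        have hd0 : d = b₀ := by
          by_contra hdb
          exact hdn (Finset.mem_erase.mpr ⟨hdb, hd⟩)
        subst hd0
        rw [← hy, hcoordb₀0, norm_zero]
        exact norm_nonneg _
      have hcardS' : S'.card ≤ m - 1 := by
        have h1 : S'.card = (A \ N).card - 1 := Finset.card_erase_of_mem hb₀
        have h3 : 0 < (A \ N).card := Finset.card_pos.mpr hANne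
        omega
      calc (‖y - Bs.proj S' y‖₊ : ℝ≥0∞)
          ≤ Bs.gc (m - 1) * ‖y‖₊ := gc_bound Bs (m - 1) y hy0 S' hcardS' hgS'
        _ = Bs.gc (m - 1) * 1 * ‖y‖₊ := by ring
        _ ≤ Bs.gc (m - 1) * Bs.omegaParam seq m * ‖y‖₊ := by gcongr
    · rw [← htdef] at htpos
      have hcne : ∀ b ∈ A \ N, Bs.coord b y ≠ 0 := by
        intro b hb h0
        have h1 := hb₀min b hb
        rw [h0, norm_zero] at h1
        linarith
      set z := y - Bs.proj (A \ N) y with hz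
      have hcz : ∀ n, Bs.coord n z = if n ∈ A ∪ N then 0 else Bs.coord n x := by
        intro n
        rw [hz, map_sub, coord_proj]
        by_cases hnN : n ∈ N
        · have h1 : Bs.coord n y = 0 := by rw [hy, coord_sub_projN, if_pos hnN]
          have hnAN : n ∉ A \ N := fun h => (Finset.mem_sdiff.mp h).2 hnN
          rw [if_neg hnAN, sub_zero, h1, if_pos (Finset.mem_union_right _ hnN)]
        · have h1 : Bs.coord n y = Bs.coord n x := by rw [hy, coord_sub_projN, if_neg hnN]
          by_cases hnA : n ∈ A
          · rw [if_pos (Finset.mem_sdiff.mpr ⟨hnA, hnN⟩), sub_self,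
              if_pos (Finset.mem_union_left _ hnA)]
          · rw [if_neg (fun h => hnA (Finset.mem_sdiff.mp h).1), sub_zero, h1,
              if_neg (by simp [hnA, hnN])]
      have htK : ((t : ℝ) : 𝕜) ≠ 0 := by
        exact_mod_cast ne_of_gt htpos
      set v := ((t : ℝ) : 𝕜)⁻¹ • z with hv
      have hzv : z = ((t : ℝ) : 𝕜) • v := by rw [hv, smul_inv_smul₀ htK]
      have hvcoord : ∀ n, Bs.coord n v = ((t : ℝ) : 𝕜)⁻¹ * Bs.coord n z := fun n => by
        rw [hv, map_smul, smul_eq_mul]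
      have hv1 : ∀ n, ‖Bs.coord n v‖ ≤ 1 := by
        intro n
        rw [hvcoord, norm_mul, norm_inv, RCLike.norm_ofReal, abs_of_pos htpos, hcz]
        split
        · simp
        · next hn =>
            have hnA : n ∉ A := fun h => hn (Finset.mem_union_left _ h)
            calc t⁻¹ * ‖Bs.coord n x‖ ≤ t⁻¹ * t := by
                  gcongr
                  exact houtA n hnA
              _ = 1 := inv_mul_cancel₀ (ne_of_gt htpos)
      obtain ⟨ε, hε, hsig⟩ :=
        exists_sign Bs t htpos.le (fun n => Bs.coord n x) (N \ A) z
          (fun n hn => houtA n (Finset.mem_sdiff.mp hn).2)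
      set δ : ℕ → 𝕜 := fun n =>
        if Bs.coord n y = 0 then 1 else Bs.coord n y / ((‖Bs.coord n y‖ : ℝ) : 𝕜) with hδdef
      have hδ1 : ∀ n, ‖δ n‖ = 1 := by
        intro n
        rw [hδdef]
        simp only
        split
        · exact norm_one
        · next h =>
            rw [norm_div, RCLike.norm_ofReal, abs_of_nonneg (norm_nonneg _),
              div_self (norm_ne_zero_iff.mpr h)]
      have hvδ : Bs.coord b₀ (v + Bs.sgnSum δ (A \ N)) = δ b₀ := by
        rw [map_add, coord_sgnSum, if_pos hb₀, hvcoord, hcz,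
          if_pos (Finset.mem_union_left _ hb₀A), mul_zero, zero_add]
      have hden : v + Bs.sgnSum δ (A \ N) ≠ 0 := by
        intro h0
        rw [h0, map_zero] at hvδ
        have h2 := hδ1 b₀
        rw [← hvδ, norm_zero] at h2
        exact one_ne_zero h2.symm
      have homega : (‖v + Bs.sgnSum ε (N \ A)‖₊ : ℝ≥0∞)
          ≤ Bs.omegaParam seq m * ‖v + Bs.sgnSum δ (A \ N)‖₊ := by
        refine omega_bound Bs seq m v hv1 (N \ A) (A \ N) ?_ ?_ hANcard ?_ ?_ ?_ ε hε δ hδ1 hden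
        · intro a ha
          have haN : a ∈ N := (Finset.mem_sdiff.mp (Finset.mem_coe.mp ha)).1
          exact N_subset_range seq k (Finset.mem_coe.mpr haN)
        · exact card_sdiff_le_card_sdiff A N (by rw [hNcard, hcard]; exact hk)
        · intro a ha
          exact mem_N_le_seq seq hseq hk (Finset.mem_sdiff.mp ha).1
        · intro d hd
          rw [hvcoord, hcz, if_pos (Finset.mem_union_left _ (Finset.mem_sdiff.mp hd).1),
            mul_zero]
        · intro a ha j hj hjr
          have haN : a ∈ N := (Finset.mem_sdiff.mp ha).1
          have hjN : j ∉ N := by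
            rcases hj with hjD | hjc
            · exact (Finset.mem_sdiff.mp hjD).2
            · intro hjN
              apply hjc
              rw [hvcoord, hcz, if_pos (Finset.mem_union_right _ hjN), mul_zero]
          exact lt_of_notMem_N seq hseq haN hjr hjN
      have habel : (‖z + ((t : ℝ) : 𝕜) • Bs.sgnSum δ (A \ N)‖₊ : ℝ≥0∞)
          ≤ Bs.gc (m - 1) * ‖y‖₊ := by
        have hf : z + ((t : ℝ) : 𝕜) • Bs.sgnSum δ (A \ N)
            = y - Bs.proj (A \ N) y
              + ∑ b ∈ A \ N,
                  (((t : ℝ) : 𝕜) * (Bs.coord b y / ((‖Bs.coord b y‖ : ℝ) : 𝕜))) • Bs.e b := by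
          rw [hz, ← smul_sgnSum]
          congr 1
          refine Finset.sum_congr rfl fun b hb => ?_
          congr 2
          rw [hδdef]
          simp only
          rw [if_neg (hcne b hb)]
        rw [hf]
        refine abel_bound Bs y y _ (A \ N) hANne hcne ?_ t
          (fun b hb => hb₀min b hb) ⟨b₀, hb₀, rfl⟩
        intro S' hsub hne hslice
        have hgS' : Bs.IsGreedySet y S' := by
          rw [hy]
          refine greedy_slice Bs x A N hg S' hsub ?_
          intro b hb d hd hdn
          have h1 := hslice b hb d hd hdn
          rwa [hy] at h1
        have hcardS' : S'.card ≤ m - 1 := by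
          have h1 := Finset.card_lt_card (hsub.ssubset_of_ne hne)
          omega
        exact gc_bound Bs (m - 1) y hy0 S' hcardS' hgS'
      rw [hrw]
      have hp : Bs.proj (N \ A) x = ∑ n ∈ N \ A, Bs.coord n x • Bs.e n := rfl
      calc (‖z + Bs.proj (N \ A) x‖₊ : ℝ≥0∞)
          = ‖z + ∑ n ∈ N \ A, Bs.coord n x • Bs.e n‖₊ := by rw [hp]
        _ ≤ (‖z + ∑ n ∈ N \ A, (((t : ℝ) : 𝕜) * ε n) • Bs.e n‖₊ : ℝ≥0∞) := by
            exact_mod_cast hsig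
        _ = ‖z + ((t : ℝ) : 𝕜) • Bs.sgnSum ε (N \ A)‖₊ := by rw [smul_sgnSum]
        _ = ‖((t : ℝ) : 𝕜) • (v + Bs.sgnSum ε (N \ A))‖₊ := by rw [smul_add, ← hzv]
        _ = (‖((t : ℝ) : 𝕜)‖₊ : ℝ≥0∞) * ‖v + Bs.sgnSum ε (N \ A)‖₊ := by
            rw [nnnorm_smul]; push_cast; ring
        _ ≤ (‖((t : ℝ) : 𝕜)‖₊ : ℝ≥0∞) * (Bs.omegaParam seq m * ‖v + Bs.sgnSum δ (A \ N)‖₊) := by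
            gcongr
        _ = Bs.omegaParam seq m * ((‖((t : ℝ) : 𝕜)‖₊ : ℝ≥0∞) * ‖v + Bs.sgnSum δ (A \ N)‖₊) := by
            ring
        _ = Bs.omegaParam seq m * ‖((t : ℝ) : 𝕜) • (v + Bs.sgnSum δ (A \ N))‖₊ := by
            rw [nnnorm_smul]; push_cast; ring
        _ = Bs.omegaParam seq m * ‖z + ((t : ℝ) : 𝕜) • Bs.sgnSum δ (A \ N)‖₊ := by
            rw [smul_add, ← hzv]
        _ ≤ Bs.omegaParam seq m * (Bs.gc (m - 1) * ‖y‖₊) := by gcongr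
        _ = Bs.gc (m - 1) * Bs.omegaParam seq m * ‖y‖₊ := by ring

end StmtSix
end Aux7

/-- Upper bounds for the (𝐧, strong partially greedy) parameter `L̂^𝐧_m`:
(i) `L̂^𝐧_m ≤ 1 + 2κm`; (ii) `L̂^𝐧_m ≤ g_m^c + g̃_m · sc^𝐧_m`;
(iii) `L̂^𝐧_m ≤ g^c_{m-1} · ω^𝐧_m`. -/
theorem statement6 {𝕜 X : Type*} [RCLike 𝕜] [NormedAddCommGroup X] [NormedSpace 𝕜 X]
    [CompleteSpace X] (B : BasisOf 𝕜 X) (seq : ℕ → ℕ) (hseq : StrictMono seq)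
    (m : ℕ) (hm : 1 ≤ m) :
    B.Lhat seq m ≤ 1 + 2 * B.kappa * (m : ℝ≥0∞) ∧
    B.Lhat seq m ≤ B.gc m + B.gtilde m * B.scParam seq m ∧
    B.Lhat seq m ≤ B.gc (m - 1) * B.omegaParam seq m := by
  exact ⟨StmtSix.part1 B seq hseq m, StmtSix.part2 B seq hseq m,
    StmtSix.part3 B seq hseq m hm⟩
end

section
/- Let 𝓑 be a basis of a Banach space X and 𝐧 a strictly increasing sequence of positive integers. For every m ≥ 1, max{g_m^c, ω^𝐧_m} ≤ max_{1≤k≤m} L̂^𝐧_k (as an inequality in [0,∞]). -/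
open scoped BigOperators ENNReal NNReal

section Aux

open Finset

variable {𝕜 X : Type*} [RCLike 𝕜] [NormedAddCommGroup X] [NormedSpace 𝕜 X] (B : BasisOf 𝕜 X)

lemma aux_coord_sgnSum (γ : ℕ → 𝕜) (F : Finset ℕ) (n : ℕ) :
    B.coord n (B.sgnSum γ F) = if n ∈ F then γ n else 0 := by
  unfold BasisOf.sgnSum
  rw [map_sum]
  simp only [map_smul, B.biorth, smul_eq_mul, mul_ite, mul_one, mul_zero]
  exact Finset.sum_ite_eq F n γ

lemma aux_proj_add (F : Finset ℕ) (x y : X) :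
    B.proj F (x + y) = B.proj F x + B.proj F y := by
  unfold BasisOf.proj
  rw [← Finset.sum_add_distrib]
  refine Finset.sum_congr rfl fun n _ => ?_
  rw [map_add, add_smul]

lemma aux_proj_eq_zero (F : Finset ℕ) (x : X) (h : ∀ n ∈ F, B.coord n x = 0) :
    B.proj F x = 0 :=
  Finset.sum_eq_zero fun n hn => by rw [h n hn, zero_smul]

lemma aux_proj_sgnSum (γ : ℕ → 𝕜) (F A : Finset ℕ) (hAF : A ⊆ F) :
    B.proj F (B.sgnSum γ A) = B.sgnSum γ A := by
  unfold BasisOf.proj BasisOf.sgnSum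
  calc ∑ n ∈ F, B.coord n (∑ k ∈ A, γ k • B.e k) • B.e n
      = ∑ n ∈ F, (if n ∈ A then γ n • B.e n else 0) := by
        refine Finset.sum_congr rfl fun n _ => ?_
        rw [show (∑ k ∈ A, γ k • B.e k) = B.sgnSum γ A from rfl, aux_coord_sgnSum]
        split <;> simp
    _ = ∑ n ∈ F ∩ A, γ n • B.e n := Finset.sum_ite_mem F A _
    _ = ∑ n ∈ A, γ n • B.e n := by rw [Finset.inter_eq_right.mpr hAF]

lemma aux_projSeq_eq (seq : ℕ → ℕ) (hseq : StrictMono seq) (j : ℕ) (x : X) :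
    B.projSeq seq j x = B.proj ((Finset.range j).image seq) x := by
  unfold BasisOf.projSeq BasisOf.proj
  rw [Finset.sum_image (fun a _ b _ h => hseq.injective h)]

lemma aux_projSeq_zero (seq : ℕ → ℕ) (x : X) : B.projSeq seq 0 x = 0 := by
  simp [BasisOf.projSeq]

/-- Any constant in the defining set of `Lhat seq k` is at least 1, for `k ≥ 1`. -/
lemma aux_one_le (seq : ℕ → ℕ) (hseq : StrictMono seq) (k : ℕ) (hk : 1 ≤ k)
    (C : ℝ≥0∞)
    (hC : ∀ (x : X) (A : Finset ℕ), A.card = k → B.IsGreedySet x A →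
      ∀ j : ℕ, j ≤ k →
        (‖x - B.proj A x‖₊ : ℝ≥0∞) ≤ C * (‖x - B.projSeq seq j x‖₊ : ℝ≥0∞)) :
    1 ≤ C := by
  classical
  set A0 : Finset ℕ := (Finset.range k).image seq with hA0
  set P1 : Finset ℕ := (Finset.range (k+1)).image seq with hP1
  have hA0P1 : A0 ⊆ P1 := Finset.image_subset_image (Finset.range_subset_range.mpr (Nat.le_succ k))
  set x0 : X := B.sgnSum (fun _ => (1:𝕜)) P1 with hx0
  have hcard : A0.card = k := by
    rw [hA0, Finset.card_image_of_injective _ hseq.injective, Finset.card_range]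
  have hsk : seq k ∉ A0 := by
    intro h
    rw [hA0, Finset.mem_image] at h
    obtain ⟨i, hi, hie⟩ := h
    rw [Finset.mem_range] at hi
    exact absurd (hseq.injective hie) (by omega)
  have hP1eq : P1 = insert (seq k) A0 := by
    rw [hP1, hA0, Finset.range_add_one, Finset.image_insert]
  have hcoord : ∀ n, B.coord n x0 = if n ∈ P1 then 1 else 0 := fun n =>
    aux_coord_sgnSum B _ _ n
  have hgr : B.IsGreedySet x0 A0 := by
    intro a ha b _
    rw [hcoord, hcoord, if_pos (hA0P1 ha)]
    split <;> simp
  have hproj : B.proj A0 x0 = B.sgnSum (fun _ => (1:𝕜)) A0 := by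
    calc B.proj A0 x0 = ∑ n ∈ A0, B.coord n x0 • B.e n := rfl
      _ = ∑ n ∈ A0, (1:𝕜) • B.e n := by
          refine Finset.sum_congr rfl fun n hn => ?_
          rw [hcoord, if_pos (hA0P1 hn)]
      _ = B.sgnSum (fun _ => (1:𝕜)) A0 := rfl
  have hdiff : x0 - B.proj A0 x0 = B.e (seq k) := by
    rw [hproj, hx0, hP1eq]
    unfold BasisOf.sgnSum
    rw [Finset.sum_insert hsk]
    simp
  have hdiff2 : x0 - B.projSeq seq k x0 = B.e (seq k) := by
    rw [aux_projSeq_eq B seq hseq, ← hA0, ← hproj] at *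
    exact hdiff
  have hkey := hC x0 A0 hcard hgr k le_rfl
  rw [hdiff, hdiff2] at hkey
  have hne : (‖B.e (seq k)‖₊ : ℝ≥0∞) ≠ 0 := by
    obtain ⟨c₁, c₂, hc₁, hlow, _⟩ := B.norm_bounds
    have := (hlow (seq k)).1
    simp only [ne_eq, ENNReal.coe_eq_zero, nnnorm_eq_zero]
    intro h
    rw [h, norm_zero] at this
    linarith
  calc (1:ℝ≥0∞) = (‖B.e (seq k)‖₊ : ℝ≥0∞) / (‖B.e (seq k)‖₊ : ℝ≥0∞) :=
        (ENNReal.div_self hne ENNReal.coe_ne_top).symm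
    _ ≤ C := ENNReal.div_le_of_le_mul hkey

/-- Core application of `Lhat`. -/
lemma aux_apply (seq : ℕ → ℕ) (m : ℕ) (k : ℕ) (hk1 : 1 ≤ k) (hkm : k ≤ m)
    (L R v : X) (G : Finset ℕ) (j : ℕ) (hG : G.card = k) (hgr : B.IsGreedySet v G)
    (hj : j ≤ k) (h1 : v - B.proj G v = L) (h2 : v - B.projSeq seq j v = R) :
    (‖L‖₊ : ℝ≥0∞) / (‖R‖₊ : ℝ≥0∞) ≤ ⨆ k ∈ Finset.Icc 1 m, B.Lhat seq k := by
  refine le_trans ?_ (le_biSup _ (Finset.mem_Icc.mpr ⟨hk1, hkm⟩))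
  refine le_sInf fun C hC => ENNReal.div_le_of_le_mul ?_
  simp only [Set.mem_setOf_eq] at hC
  rw [← h1, ← h2]
  exact hC v G hG hgr j hj

end Aux

/-- Lower bound: `max {g_m^c, ω^𝐧_m} ≤ max_{1 ≤ k ≤ m} L̂^𝐧_k`. -/
theorem statement7 {𝕜 X : Type*} [RCLike 𝕜] [NormedAddCommGroup X] [NormedSpace 𝕜 X]
    [CompleteSpace X] (B : BasisOf 𝕜 X) (seq : ℕ → ℕ) (hseq : StrictMono seq)
    (m : ℕ) (hm : 1 ≤ m) :
    max (B.gc m) (B.omegaParam seq m) ≤ ⨆ k ∈ Finset.Icc 1 m, B.Lhat seq k := by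
  classical
  have hinj := hseq.injective
  refine max_le ?_ ?_
  · -- g_m^c part
    rw [BasisOf.gc]
    simp only [iSup_le_iff]
    intro x hx A hcard hgr
    rcases Nat.eq_zero_or_pos A.card with h0 | hpos
    · have hA : A = ∅ := Finset.card_eq_zero.mp h0
      subst hA
      have hproj : B.proj ∅ x = 0 := by simp [BasisOf.proj]
      rw [hproj, sub_zero]
      refine le_trans ?_ (le_biSup _ (Finset.mem_Icc.mpr ⟨hm, le_rfl⟩))
      refine le_sInf fun C hC => ?_
      simp only [Set.mem_setOf_eq] at hC
      exact le_trans ENNReal.div_self_le_one (aux_one_le B seq hseq m hm C hC)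
    · exact aux_apply B seq m A.card hpos hcard _ _ x A 0 rfl hgr (Nat.zero_le _)
        rfl (by rw [aux_projSeq_zero, sub_zero])
  · -- ω^𝐧_m part
    rw [BasisOf.omegaParam]
    simp only [iSup_le_iff]
    intro x hx A D hAseq hcard hDm hAle hD0 hlt ε hε δ hδ
    have hAD : ∀ a ∈ A, a ∉ D := fun a ha had =>
      lt_irrefl a (hlt a ha a (Or.inl had) (hAseq (Finset.mem_coe.mpr ha)))
    have hAx : ∀ a ∈ A, B.coord a x = 0 := fun a ha => by
      by_contra h
      exact lt_irrefl a (hlt a ha a (Or.inr h) (hAseq (Finset.mem_coe.mpr ha)))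
    by_cases hD : D = ∅
    · -- degenerate case: both sets empty
      have hA : A = ∅ := Finset.card_eq_zero.mp (by
        have := hcard; rw [hD, Finset.card_empty] at this; omega)
      subst hA; subst hD
      have hs1 : B.sgnSum ε (∅ : Finset ℕ) = 0 := by simp [BasisOf.sgnSum]
      have hs2 : B.sgnSum δ (∅ : Finset ℕ) = 0 := by simp [BasisOf.sgnSum]
      rw [hs1, hs2, add_zero]
      refine le_trans ?_ (le_biSup _ (Finset.mem_Icc.mpr ⟨hm, le_rfl⟩))
      refine le_sInf fun C hC => ?_
      simp only [Set.mem_setOf_eq] at hC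
      exact le_trans ENNReal.div_self_le_one (aux_one_le B seq hseq m hm C hC)
    by_cases hA : A = ∅
    · -- A empty, D nonempty
      subst hA
      have hs1 : B.sgnSum ε (∅ : Finset ℕ) = 0 := by simp [BasisOf.sgnSum]
      set v := x + B.sgnSum δ D with hv
      have hcoordv : ∀ n, B.coord n v = B.coord n x + (if n ∈ D then δ n else 0) := by
        intro n
        rw [hv, map_add, aux_coord_sgnSum]
      have hgrv : B.IsGreedySet v D := by
        intro a ha b hb
        have hbv : B.coord b v = B.coord b x := by rw [hcoordv, if_neg hb, add_zero]
        have hav : B.coord a v = δ a := by rw [hcoordv, hD0 a ha, if_pos ha, zero_add]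
        rw [hav, hbv, hδ]
        exact hx b
      have h1 : v - B.proj D v = x + B.sgnSum ε ∅ := by
        rw [hs1, add_zero, hv, aux_proj_add, aux_proj_eq_zero B D x hD0,
          aux_proj_sgnSum B δ D D Finset.Subset.rfl]
        abel
      have h2 : v - B.projSeq seq 0 v = x + B.sgnSum δ D := by
        rw [aux_projSeq_zero, sub_zero]
      have hk1 : 1 ≤ D.card := Finset.card_pos.mpr (Finset.nonempty_of_ne_empty hD)
      exact aux_apply B seq m D.card hk1 hDm _ _ v D 0 rfl hgrv (Nat.zero_le _) h1 h2
    · -- A nonempty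
      have hAne : A.Nonempty := Finset.nonempty_of_ne_empty hA
      obtain ⟨i₀, hi₀⟩ := hAseq (Finset.mem_coe.mpr (A.max'_mem hAne))
      have hjm : i₀ + 1 ≤ m := by
        have h1 : A.max' hAne ≤ seq (m-1) := hAle _ (A.max'_mem hAne)
        have h2 : i₀ ≤ m - 1 := hseq.le_iff_le.mp (by rw [hi₀]; exact h1)
        omega
      set j := i₀ + 1 with hj
      set P := (Finset.range j).image seq with hP
      have hPcard : P.card = j := by
        rw [hP, Finset.card_image_of_injective _ hinj, Finset.card_range]
      have hAP : A ⊆ P := fun a ha => by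
        obtain ⟨ia, hia⟩ := hAseq (Finset.mem_coe.mpr ha)
        have hle : a ≤ A.max' hAne := A.le_max' a ha
        have hia' : ia ≤ i₀ := hseq.le_iff_le.mp (by rw [hia, hi₀]; exact hle)
        exact Finset.mem_image.mpr ⟨ia, Finset.mem_range.mpr (by omega), hia⟩
      have hPle : ∀ p ∈ P, p ≤ A.max' hAne := fun p hp => by
        obtain ⟨i, hi, rfl⟩ := Finset.mem_image.mp hp
        rw [Finset.mem_range] at hi
        rw [← hi₀]
        exact hseq.monotone (by omega)
      have hPD : ∀ p ∈ P, p ∉ D := fun p hp hpd => by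
        obtain ⟨i, _, hie⟩ := Finset.mem_image.mp hp
        exact absurd (hlt _ (A.max'_mem hAne) p (Or.inl hpd) ⟨i, hie⟩)
          (not_lt.mpr (hPle p hp))
      have hPx : ∀ p ∈ P, B.coord p x = 0 := fun p hp => by
        by_contra h
        obtain ⟨i, _, hie⟩ := Finset.mem_image.mp hp
        exact absurd (hlt _ (A.max'_mem hAne) p (Or.inr h) ⟨i, hie⟩)
          (not_lt.mpr (hPle p hp))
      set k := max j D.card with hk
      have hk1 : 1 ≤ k := le_trans (by omega) (le_max_left j D.card)
      have hkm : k ≤ m := max_le hjm hDm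
      have hAcj : A.card ≤ j := hPcard ▸ Finset.card_le_card hAP
      have hEex : k - D.card ≤ (P \ A).card := by
        rw [Finset.card_sdiff_of_subset hAP, hPcard]
        rcases max_cases j D.card with ⟨he, _⟩ | ⟨he, _⟩ <;> omega
      obtain ⟨E, hEsub, hEcard⟩ := Finset.exists_subset_card_eq hEex
      have hEP : E ⊆ P := hEsub.trans Finset.sdiff_subset
      have hEA : ∀ e ∈ E, e ∉ A := fun e he => (Finset.mem_sdiff.mp (hEsub he)).2
      have hED : ∀ e ∈ E, e ∉ D := fun e he => hPD e (hEP he)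
      have hEx : ∀ e ∈ E, B.coord e x = 0 := fun e he => hPx e (hEP he)
      set G := D ∪ E with hG
      have hDisjDE : Disjoint D E := Finset.disjoint_left.mpr fun n hnD hnE => hED n hnE hnD
      have hGcard : G.card = k := by
        rw [hG, Finset.card_union_of_disjoint hDisjDE, hEcard]
        have := le_max_right j D.card
        omega
      set v := x + B.sgnSum ε A + B.sgnSum δ D + B.sgnSum (fun _ => (1:𝕜)) E with hv
      have hcoordv : ∀ n, B.coord n v = B.coord n x + (if n ∈ A then ε n else 0)
          + (if n ∈ D then δ n else 0) + (if n ∈ E then (1:𝕜) else 0) := by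
        intro n
        rw [hv]
        simp only [map_add, aux_coord_sgnSum]
      have hgr : B.IsGreedySet v G := by
        intro a haG b hbG
        have hbD : b ∉ D := fun h => hbG (Finset.mem_union_left _ h)
        have hbE : b ∉ E := fun h => hbG (Finset.mem_union_right _ h)
        have hbnorm : ‖B.coord b v‖ ≤ 1 := by
          rw [hcoordv, if_neg hbD, if_neg hbE, add_zero, add_zero]
          by_cases hbA : b ∈ A
          · rw [hAx b hbA, if_pos hbA, zero_add, hε]
          · rw [if_neg hbA, add_zero]
            exact hx b
        have hanorm : ‖B.coord a v‖ = 1 := by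
          rcases Finset.mem_union.mp haG with haD | haE
          · have h1 : a ∉ A := fun h => hAD a h haD
            have h2 : a ∉ E := fun h => hED a h haD
            rw [hcoordv, hD0 a haD, if_neg h1, if_pos haD, if_neg h2, zero_add,
              zero_add, add_zero, hδ]
          · rw [hcoordv, hEx a haE, if_neg (hEA a haE), if_neg (hED a haE),
              if_pos haE, zero_add, zero_add, zero_add, norm_one]
        rw [hanorm]
        exact hbnorm
      have hGx : B.proj G x = 0 := aux_proj_eq_zero B G x fun n hn => by
        rcases Finset.mem_union.mp hn with h | h
        · exact hD0 n h
        · exact hEx n h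
      have hGε : B.proj G (B.sgnSum ε A) = 0 := aux_proj_eq_zero B G _ fun n hn => by
        rw [aux_coord_sgnSum, if_neg]
        rcases Finset.mem_union.mp hn with h | h
        · exact fun hA' => hAD n hA' h
        · exact hEA n h
      have hGδ : B.proj G (B.sgnSum δ D) = B.sgnSum δ D :=
        aux_proj_sgnSum B δ G D Finset.subset_union_left
      have hGE : B.proj G (B.sgnSum (fun _ => (1:𝕜)) E) = B.sgnSum (fun _ => (1:𝕜)) E :=
        aux_proj_sgnSum B _ G E Finset.subset_union_right
      have h1 : v - B.proj G v = x + B.sgnSum ε A := by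
        rw [hv, aux_proj_add, aux_proj_add, aux_proj_add, hGx, hGε, hGδ, hGE]
        abel
      have hPxz : B.proj P x = 0 := aux_proj_eq_zero B P x hPx
      have hPε : B.proj P (B.sgnSum ε A) = B.sgnSum ε A := aux_proj_sgnSum B ε P A hAP
      have hPδ : B.proj P (B.sgnSum δ D) = 0 := aux_proj_eq_zero B P _ fun n hn => by
        rw [aux_coord_sgnSum, if_neg (hPD n hn)]
      have hPE : B.proj P (B.sgnSum (fun _ => (1:𝕜)) E) = B.sgnSum (fun _ => (1:𝕜)) E :=
        aux_proj_sgnSum B _ P E hEP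
      have h2 : v - B.projSeq seq j v = x + B.sgnSum δ D := by
        rw [aux_projSeq_eq B seq hseq, ← hP, hv, aux_proj_add, aux_proj_add,
          aux_proj_add, hPxz, hPε, hPδ, hPE]
        abel
      exact aux_apply B seq m k hk1 hkm _ _ v G j hGcard hgr (le_max_left _ _) h1 h2
end

section
/- Let 𝓑 be a basis of a Banach space X and 𝐧 a strictly increasing sequence of positive integers. For every m ≥ 1, the parameters ω^𝐧_m and ω̂^𝐧_m are equal (as elements of [0,∞]). -/
open scoped BigOperators ENNReal NNReal

section Aux

variable {𝕜 X : Type*} [RCLike 𝕜] [NormedAddCommGroup X] [NormedSpace 𝕜 X]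

lemma exists_convex_sign (κ : 𝕜) (h : ‖κ‖ ≤ 1) :
    ∃ (t : ℝ) (u v : 𝕜), 0 ≤ t ∧ t ≤ 1 ∧ ‖u‖ = 1 ∧ ‖v‖ = 1 ∧
      κ = (t : 𝕜) * u + ((1 - t : ℝ) : 𝕜) * v := by
  by_cases hκ : κ = 0
  · refine ⟨1/2, 1, -1, by norm_num, by norm_num, by simp, by simp, ?_⟩
    subst hκ; push_cast; ring
  · have hs : ‖κ‖ ≠ 0 := norm_ne_zero_iff.2 hκ
    refine ⟨(1 + ‖κ‖)/2, ((‖κ‖⁻¹ : ℝ) : 𝕜) * κ, -(((‖κ‖⁻¹ : ℝ) : 𝕜) * κ),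
      by positivity, by linarith, ?_, ?_, ?_⟩
    · rw [norm_mul, RCLike.norm_ofReal, abs_of_nonneg (by positivity)]
      field_simp
    · rw [norm_neg, norm_mul, RCLike.norm_ofReal, abs_of_nonneg (by positivity)]
      field_simp
    · push_cast
      have hsk : (‖κ‖ : 𝕜) ≠ 0 := by
        simpa using (RCLike.ofReal_ne_zero (K := 𝕜)).2 hs
      field_simp
      ring

lemma exists_sign_norm_le (B : BasisOf 𝕜 X) (A : Finset ℕ) (κ : ℕ → 𝕜)
    (hκ : ∀ n, ‖κ n‖ ≤ 1) :
    ∀ y : X, ∃ ε : ℕ → 𝕜, (∀ n, ‖ε n‖ = 1) ∧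
      ‖y + ∑ n ∈ A, κ n • B.e n‖ ≤ ‖y + B.sgnSum ε A‖ := by
  classical
  induction A using Finset.induction with
  | empty => exact fun y => ⟨fun _ => 1, fun _ => by simp, by simp [BasisOf.sgnSum]⟩
  | @insert a A ha ih =>
    intro y
    obtain ⟨ε, hε, hle⟩ := ih (y + κ a • B.e a)
    obtain ⟨t, u, v, ht0, ht1, hu, hv, hκa⟩ := exists_convex_sign (κ a) (hκ a)
    set z := y + B.sgnSum ε A with hz
    set tK : 𝕜 := (t : 𝕜) with htK
    set sK : 𝕜 := ((1 - t : ℝ) : 𝕜) with hsK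
    have htts : tK + sK = 1 := by rw [htK, hsK]; push_cast; ring
    have hdecomp : z + κ a • B.e a = tK • (z + u • B.e a) + sK • (z + v • B.e a) := by
      have hzz : tK • z + sK • z = z := by rw [← add_smul, htts, one_smul]
      calc z + κ a • B.e a = (tK • z + sK • z) + ((tK * u) • B.e a + (sK * v) • B.e a) := by
            rw [hzz, hκa, ← add_smul]
        _ = tK • (z + u • B.e a) + sK • (z + v • B.e a) := by
            simp only [smul_add, smul_smul]; abel
    have key : ‖z + κ a • B.e a‖ ≤ max ‖z + u • B.e a‖ ‖z + v • B.e a‖ := by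
      rw [hdecomp]
      have h1 : ‖tK • (z + u • B.e a) + sK • (z + v • B.e a)‖
          ≤ ‖tK‖ * ‖z + u • B.e a‖ + ‖sK‖ * ‖z + v • B.e a‖ := by
        refine (norm_add_le _ _).trans ?_
        rw [norm_smul, norm_smul]
      have htKn : ‖tK‖ = t := by rw [htK, RCLike.norm_ofReal, abs_of_nonneg ht0]
      have hsKn : ‖sK‖ = 1 - t := by
        rw [hsK, RCLike.norm_ofReal, abs_of_nonneg (by linarith)]
      rw [htKn, hsKn] at h1
      refine h1.trans ?_
      have h2 := le_max_left ‖z + u • B.e a‖ ‖z + v • B.e a‖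
      have h3 := le_max_right ‖z + u • B.e a‖ ‖z + v • B.e a‖
      nlinarith
    obtain ⟨w, hw1, hwle⟩ : ∃ w : 𝕜, ‖w‖ = 1 ∧ ‖z + κ a • B.e a‖ ≤ ‖z + w • B.e a‖ := by
      rcases le_max_iff.1 key with h | h
      · exact ⟨u, hu, h⟩
      · exact ⟨v, hv, h⟩
    refine ⟨Function.update ε a w, ?_, ?_⟩
    · intro n
      by_cases hn : n = a
      · subst hn; simp [hw1]
      · simp [Function.update_of_ne hn, hε n]
    · have hsgn : B.sgnSum (Function.update ε a w) (insert a A)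
          = w • B.e a + B.sgnSum ε A := by
        rw [BasisOf.sgnSum, Finset.sum_insert ha, Function.update_self, BasisOf.sgnSum]
        congr 1
        refine Finset.sum_congr rfl fun n hn => ?_
        rw [Function.update_of_ne (by rintro rfl; exact ha hn)]
      rw [Finset.sum_insert ha, hsgn]
      calc ‖y + (κ a • B.e a + ∑ n ∈ A, κ n • B.e n)‖
          = ‖(y + κ a • B.e a) + ∑ n ∈ A, κ n • B.e n‖ := by rw [add_assoc]
        _ ≤ ‖(y + κ a • B.e a) + B.sgnSum ε A‖ := hle
        _ = ‖z + κ a • B.e a‖ := by rw [hz]; congr 1; abel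
        _ ≤ ‖z + w • B.e a‖ := hwle
        _ = ‖y + (w • B.e a + B.sgnSum ε A)‖ := by rw [hz]; congr 1; abel

lemma coord_sgnSum (B : BasisOf 𝕜 X) (ε : ℕ → 𝕜) (A : Finset ℕ) (n : ℕ) :
    B.coord n (B.sgnSum ε A) = if n ∈ A then ε n else 0 := by
  classical
  rw [BasisOf.sgnSum, map_sum]
  simp only [map_smul, B.biorth, smul_eq_mul, mul_ite, mul_one, mul_zero]
  simp [Finset.sum_ite_eq]

lemma coord_proj (B : BasisOf 𝕜 X) (A : Finset ℕ) (x : X) (n : ℕ) :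
    B.coord n (B.proj A x) = if n ∈ A then B.coord n x else 0 := by
  classical
  rw [BasisOf.proj, map_sum]
  simp only [map_smul, B.biorth, smul_eq_mul, mul_ite, mul_one, mul_zero]
  simp [Finset.sum_ite_eq]

end Aux

/-- The parameters `ω^𝐧_m` and `ω̂^𝐧_m` coincide. -/
theorem statement8 {𝕜 X : Type*} [RCLike 𝕜] [NormedAddCommGroup X] [NormedSpace 𝕜 X]
    [CompleteSpace X] (B : BasisOf 𝕜 X) (seq : ℕ → ℕ) (hseq : StrictMono seq)
    (m : ℕ) (hm : 1 ≤ m) :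
    B.omegaParam seq m = B.omegaHatParam seq m := by
  classical
  apply le_antisymm
  · -- ω ≤ ω̂ : substitute y = x + 1_{εA}
    rw [BasisOf.omegaParam, BasisOf.omegaHatParam]
    refine iSup_le fun x => iSup_le fun hx => iSup_le fun A => iSup_le fun D =>
      iSup_le fun hsub => iSup_le fun hcard => iSup_le fun hDm => iSup_le fun hAle =>
      iSup_le fun hDzero => iSup_le fun hlt => iSup_le fun ε => iSup_le fun hε =>
      iSup_le fun δ => iSup_le fun hδ => ?_
    have hAzero : ∀ a ∈ A, B.coord a x = 0 := by
      intro a haA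
      by_contra hne
      exact lt_irrefl a (hlt a haA a (Or.inr hne) (hsub haA))
    set y := x + B.sgnSum ε A with hy
    have hycoord : ∀ n, B.coord n y = if n ∈ A then ε n else B.coord n x := by
      intro n
      rw [hy, map_add, coord_sgnSum]
      by_cases hn : n ∈ A
      · simp [hn, hAzero n hn]
      · simp [hn]
    have hproj : B.proj A y = B.sgnSum ε A := by
      rw [BasisOf.proj, BasisOf.sgnSum]
      refine Finset.sum_congr rfl fun n hn => ?_
      rw [hycoord n, if_pos hn]
    have hsub' : y - B.proj A y = x := by rw [hproj, hy]; abel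
    have hy1 : ∀ n, ‖B.coord n y‖ ≤ 1 := by
      intro n
      rw [hycoord n]
      by_cases hn : n ∈ A
      · simp [hn, hε n]
      · simpa [hn] using hx n
    have hD' : ∀ d ∈ D, B.coord d (y - B.proj A y) = 0 := by
      intro d hd; rw [hsub']; exact hDzero d hd
    have hlt' : ∀ a ∈ A, ∀ j : ℕ, (j ∈ D ∨ B.coord j (y - B.proj A y) ≠ 0) →
        j ∈ Set.range seq → a < j := by
      intro a ha j hj hjr
      rw [hsub'] at hj
      exact hlt a ha j hj hjr
    refine le_iSup_of_le y ?_
    refine le_iSup_of_le hy1 ?_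
    refine le_iSup_of_le A ?_
    refine le_iSup_of_le D ?_
    refine le_iSup_of_le hsub ?_
    refine le_iSup_of_le hcard ?_
    refine le_iSup_of_le hDm ?_
    refine le_iSup_of_le hAle ?_
    refine le_iSup_of_le hD' ?_
    refine le_iSup_of_le hlt' ?_
    refine le_iSup_of_le δ ?_
    refine le_iSup_of_le hδ ?_
    rw [hsub']
  · -- ω̂ ≤ ω : convexity
    rw [BasisOf.omegaParam, BasisOf.omegaHatParam]
    refine iSup_le fun x => iSup_le fun hx => iSup_le fun A => iSup_le fun D =>
      iSup_le fun hsub => iSup_le fun hcard => iSup_le fun hDm => iSup_le fun hAle =>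
      iSup_le fun hDzero => iSup_le fun hlt => iSup_le fun ε => iSup_le fun hε => ?_
    set y := x - B.proj A x with hy
    have hycoord : ∀ n, B.coord n y = if n ∈ A then 0 else B.coord n x := by
      intro n
      rw [hy, map_sub, coord_proj]
      by_cases hn : n ∈ A <;> simp [hn]
    have hy1 : ∀ n, ‖B.coord n y‖ ≤ 1 := by
      intro n
      rw [hycoord n]
      by_cases hn : n ∈ A
      · simp [hn]
      · simpa [hn] using hx n
    have hxy : x = y + ∑ n ∈ A, B.coord n x • B.e n := by
      rw [hy, BasisOf.proj]; abel
    obtain ⟨ε', hε', hle⟩ := exists_sign_norm_le B A (fun n => B.coord n x)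
      (fun n => hx n) y
    have hnum : (‖x‖₊ : ℝ≥0∞) ≤ (‖y + B.sgnSum ε' A‖₊ : ℝ≥0∞) := by
      have : ‖x‖ ≤ ‖y + B.sgnSum ε' A‖ := by rw [hxy]; exact hle
      exact_mod_cast this
    refine le_trans (ENNReal.div_le_div_right hnum _) ?_
    refine le_iSup_of_le y ?_
    refine le_iSup_of_le hy1 ?_
    refine le_iSup_of_le A ?_
    refine le_iSup_of_le D ?_
    refine le_iSup_of_le hsub ?_
    refine le_iSup_of_le hcard ?_
    refine le_iSup_of_le hDm ?_
    refine le_iSup_of_le hAle ?_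
    refine le_iSup_of_le hDzero ?_
    refine le_iSup_of_le hlt ?_
    refine le_iSup_of_le ε' ?_
    refine le_iSup_of_le hε' ?_
    refine le_iSup_of_le ε ?_
    exact le_iSup_of_le hε le_rfl
end

section
/- Let 𝓑 be a basis of a Banach space X and 𝐧 a strictly increasing sequence of positive integers. Then 𝓑 is 1-(𝐧, strong partially greedy) (i.e., (𝐧, strong partially greedy) with constant C = 1) if and only if 𝓑 is 1-(𝐧, PSLC) (i.e., (𝐧, PSLC) with constant C = 1). -/
open scoped BigOperators ENNReal NNReal

/-! `1-PSLC ⇒ 1-SPG`: write `K = {n_1, …, n_k}`, `t = min_{n ∈ A} |e_n^*(x)|` and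
`u = x - P_{A ∪ K}(x)`, so that `‖u‖_∞ ≤ t`, `x - G_m(x) = u + P_{K \ A}(x)` and
`x - P^𝐧_k(x) = u + P_{A \ K}(x)`. The coefficients of `P_{K \ A}(x)` are at most `t`, so by
convexity `‖u + P_{K \ A}(x)‖ ≤ ‖u + t 1_{ε(K \ A)}‖` for some sign `ε`; PSLC (rescaled by `t`)
compares this with `‖u + t 1_{δ(A \ K)}‖`, `δ` the signs of the coefficients of `x`; and PSLC with
`A = ∅` makes `λ ↦ ‖u + λ 1_{δ(A \ K)}‖` nondecreasing for `λ ≥ t`, which lets the coefficients on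
`A \ K` be raised from `t` to their true moduli, the smallest first.

`1-SPG ⇒ 1-PSLC`: given `x`, `A`, `D`, complete `A` to an initial segment `K = A ⊔ G` of `𝐧`; then
`y = x + 1_{εA} + 1_{δD} + 1_G` has the greedy set `D ∪ G`, of size at least `|K|`, and
`y - P_{D ∪ G}(y) = x + 1_{εA}`, `y - P^𝐧_{|K|}(y) = x + 1_{δD}`. -/

open Finset

noncomputable def unitSign {𝕜 : Type*} [RCLike 𝕜] (z : 𝕜) : 𝕜 :=
  if z = 0 then 1 else z / (‖z‖ : 𝕜)

section UnitSign

variable {𝕜 : Type*} [RCLike 𝕜]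

lemma norm_unitSign (z : 𝕜) : ‖unitSign z‖ = 1 := by
  unfold unitSign
  split_ifs with hz
  · exact norm_one
  · rw [norm_div, RCLike.norm_ofReal, abs_norm, div_self (norm_ne_zero_iff.2 hz)]

lemma norm_mul_unitSign (z : 𝕜) : (‖z‖ : 𝕜) * unitSign z = z := by
  unfold unitSign
  split_ifs with hz
  · simp [hz]
  · exact mul_div_cancel₀ z (by simpa using hz)

lemma unitSign_conj_mul_self (z : 𝕜) : unitSign (starRingEnd 𝕜 z) * z = (‖z‖ : 𝕜) := by
  unfold unitSign
  split_ifs with hz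
  · simp_all
  · have hz' : (‖z‖ : 𝕜) ≠ 0 := by simpa using hz
    rw [RCLike.norm_conj, div_mul_eq_mul_div, RCLike.conj_mul, sq, mul_div_cancel_right₀ _ hz']

end UnitSign

section Convexity

variable {𝕜 X ι : Type*} [RCLike 𝕜] [NormedAddCommGroup X] [NormedSpace 𝕜 X]

/-- The point `(c_i)_{i ∈ E}` of the polydisc of radius `t` is a convex combination of points of the
torus `{|ε_i| = t}`; the extreme torus point is found by norming `u + ∑ c_i v_i` with a
functional and aligning each `ε_i` with its value on `v_i`. -/
lemma exists_norm_add_sum_smul_le (u : X) (v : ι → X) (E : Finset ι) (c : ι → 𝕜) {t : ℝ}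
    (hc : ∀ i ∈ E, ‖c i‖ ≤ t) :
    ∃ ε : ι → 𝕜, (∀ i, ‖ε i‖ = 1) ∧
      ‖u + ∑ i ∈ E, c i • v i‖ ≤ ‖u + (t : 𝕜) • ∑ i ∈ E, ε i • v i‖ := by
  set w := u + ∑ i ∈ E, c i • v i
  obtain ⟨g, hg, hgw⟩ : ∃ g : StrongDual 𝕜 X, ‖g‖ ≤ 1 ∧ g w = ‖w‖ := by
    by_cases hw : w = 0
    · exact ⟨0, by simp, by simp [hw]⟩
    · obtain ⟨g, hg, hgw⟩ := exists_dual_vector 𝕜 w (norm_ne_zero_iff.2 hw)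
      exact ⟨g, hg.le, hgw⟩
  set ε : ι → 𝕜 := fun i => unitSign (starRingEnd 𝕜 (g (v i)))
  refine ⟨ε, fun i => norm_unitSign _, ?_⟩
  have hterm : ∀ i ∈ E, RCLike.re (c i * g (v i)) ≤ RCLike.re ((t : 𝕜) * (ε i * g (v i))) := by
    intro i hi
    rw [unitSign_conj_mul_self, ← RCLike.ofReal_mul, RCLike.ofReal_re]
    calc RCLike.re (c i * g (v i)) ≤ ‖c i * g (v i)‖ := RCLike.re_le_norm _
      _ = ‖c i‖ * ‖g (v i)‖ := norm_mul _ _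
      _ ≤ t * ‖g (v i)‖ := mul_le_mul_of_nonneg_right (hc i hi) (norm_nonneg _)
  calc ‖w‖ = RCLike.re (g u) + ∑ i ∈ E, RCLike.re (c i * g (v i)) := by
        rw [← RCLike.ofReal_re (K := 𝕜) ‖w‖, ← hgw]
        simp [w, map_sum, smul_eq_mul]
    _ ≤ RCLike.re (g u) + ∑ i ∈ E, RCLike.re ((t : 𝕜) * (ε i * g (v i))) :=
        add_le_add le_rfl (sum_le_sum hterm)
    _ = RCLike.re (g (u + (t : 𝕜) • ∑ i ∈ E, ε i • v i)) := by
        simp [map_sum, smul_eq_mul, Finset.mul_sum]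
    _ ≤ ‖g (u + (t : 𝕜) • ∑ i ∈ E, ε i • v i)‖ := RCLike.re_le_norm _
    _ ≤ ‖u + (t : 𝕜) • ∑ i ∈ E, ε i • v i‖ := (g.le_of_opNorm_le hg _).trans_eq (one_mul _)

end Convexity

lemma StrictMono.lt_of_mem_image_range {seq : ℕ → ℕ} (hseq : StrictMono seq) {k a j : ℕ}
    (ha : a ∈ (range k).image seq) (hj : j ∈ Set.range seq) (hjk : j ∉ (range k).image seq) :
    a < j := by
  obtain ⟨i, hi, rfl⟩ := mem_image.1 ha
  obtain ⟨i', rfl⟩ := hj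
  exact hseq (lt_of_lt_of_le (mem_range.1 hi)
    (not_lt.1 fun h => hjk (mem_image_of_mem seq (mem_range.2 h))))

lemma StrictMono.exists_image_range_supset {seq : ℕ → ℕ} (hseq : StrictMono seq) {A : Finset ℕ}
    (hA : (A : Set ℕ) ⊆ Set.range seq) :
    ∃ κ, A ⊆ (range κ).image seq ∧ ∀ i < κ, ∃ a ∈ A, seq i ≤ a := by
  set I := A.preimage seq hseq.injective.injOn
  refine ⟨I.sup (· + 1), fun a ha => ?_, fun i hi => ?_⟩
  · obtain ⟨i, rfl⟩ := hA ha
    exact mem_image_of_mem seq (mem_range.2 (Nat.lt_of_succ_le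
      (le_sup (f := (· + 1)) (mem_preimage.2 ha))))
  · obtain ⟨j, hj, hij⟩ := Finset.lt_sup_iff.1 hi
    exact ⟨seq j, mem_preimage.1 hj, hseq.monotone (Nat.lt_succ_iff.1 hij)⟩

namespace BasisOf

variable {𝕜 X : Type*} [RCLike 𝕜] [NormedAddCommGroup X] [NormedSpace 𝕜 X] {B : BasisOf 𝕜 X}

lemma coord_sgnSum (n : ℕ) (σ : ℕ → 𝕜) (F : Finset ℕ) :
    B.coord n (B.sgnSum σ F) = if n ∈ F then σ n else 0 := by
  simp only [sgnSum, map_sum, map_smul, B.biorth, smul_eq_mul, mul_ite, mul_one, mul_zero,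
    sum_ite_eq]

lemma coord_sub_proj (n : ℕ) (S : Finset ℕ) (x : X) :
    B.coord n (x - B.proj S x) = if n ∈ S then 0 else B.coord n x := by
  rw [map_sub, proj, ← sgnSum, coord_sgnSum]
  split_ifs <;> simp

lemma sub_proj_eq_sub_proj_add_proj_sdiff {S T : Finset ℕ} (hST : S ⊆ T) (x : X) :
    x - B.proj S x = (x - B.proj T x) + B.proj (T \ S) x := by
  rw [proj, proj, proj, ← sum_sdiff hST]
  abel

lemma projSeq_eq_proj_image {seq : ℕ → ℕ} (hseq : StrictMono seq) (k : ℕ) (x : X) :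
    B.projSeq seq k x = B.proj ((range k).image seq) x := by
  rw [projSeq, proj, sum_image fun _ _ _ _ h => hseq.injective h]

lemma sub_proj_add_sgnSum_union {z : X} {σ : ℕ → 𝕜} {S T : Finset ℕ} (hST : Disjoint S T)
    (hz : ∀ n ∈ T, B.coord n z = 0) :
    z + B.sgnSum σ (S ∪ T) - B.proj T (z + B.sgnSum σ (S ∪ T)) = z + B.sgnSum σ S := by
  have hproj : B.proj T (z + B.sgnSum σ (S ∪ T)) = B.sgnSum σ T := by
    refine sum_congr rfl fun n hn => ?_
    rw [map_add, hz n hn, coord_sgnSum, if_pos (mem_union_right S hn), zero_add]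
  rw [hproj, sgnSum, sum_union hST, ← sgnSum, ← sgnSum]
  abel

lemma isGreedySet_add_sgnSum {z : X} {σ : ℕ → 𝕜} {F T : Finset ℕ}
    (hz : ∀ n, ‖B.coord n z‖ ≤ 1) (hzF : ∀ n ∈ F, B.coord n z = 0) (hσ : ∀ n, ‖σ n‖ = 1)
    (hTF : T ⊆ F) : B.IsGreedySet (z + B.sgnSum σ F) T := by
  have hcoord : ∀ n, ‖B.coord n (z + B.sgnSum σ F)‖ = if n ∈ F then 1 else ‖B.coord n z‖ := by
    intro n
    rw [map_add, coord_sgnSum]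
    split_ifs with hn
    · rw [hzF n hn, zero_add, hσ]
    · rw [add_zero]
  intro a ha b _
  rw [hcoord, hcoord, if_pos (hTF ha)]
  split_ifs
  exacts [le_rfl, hz b]

lemma IsGreedySet.exists_threshold {x : X} {A : Finset ℕ} (hA : A.Nonempty)
    (hgr : B.IsGreedySet x A) :
    ∃ t, 0 ≤ t ∧ (∀ n ∉ A, ‖B.coord n x‖ ≤ t) ∧ ∀ n ∈ A, t ≤ ‖B.coord n x‖ := by
  obtain ⟨a, ha, hmin⟩ := A.exists_min_image (fun n => ‖B.coord n x‖) hA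
  exact ⟨_, norm_nonneg _, fun n hn => hgr a ha n hn, hmin⟩

section PSLC

variable {seq : ℕ → ℕ} (hP : B.PSLCWith seq 1)
include hP

lemma PSLCWith.norm_add_smul_sgnSum_le {u : X} {t : ℝ} (hu : ∀ n, ‖B.coord n u‖ ≤ t)
    {A D : Finset ℕ} (hAD : TPair seq A D) (hD : ∀ d ∈ D, B.coord d u = 0)
    (hA : ∀ a ∈ A, ∀ j : ℕ, (j ∈ D ∨ B.coord j u ≠ 0) → j ∈ Set.range seq → a < j)
    {ε δ : ℕ → 𝕜} (hε : ∀ n, ‖ε n‖ = 1) (hδ : ∀ n, ‖δ n‖ = 1) :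
    ‖u + (t : 𝕜) • B.sgnSum ε A‖ ≤ ‖u + (t : 𝕜) • B.sgnSum δ D‖ := by
  rcases (le_trans (norm_nonneg _) (hu 0)).eq_or_lt with rfl | ht
  · simp
  have ht𝕜 : (t : 𝕜) ≠ 0 := RCLike.ofReal_ne_zero.2 ht.ne'
  have hscale : ∀ w : X, u + (t : 𝕜) • w = (t : 𝕜) • ((t : 𝕜)⁻¹ • u + w) := by
    intro w
    rw [smul_add, smul_smul, mul_inv_cancel₀ ht𝕜, one_smul]
  have hcoord : ∀ n, B.coord n ((t : 𝕜)⁻¹ • u) = (t : 𝕜)⁻¹ * B.coord n u := fun n => by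
    rw [map_smul, smul_eq_mul]
  have h := hP ((t : 𝕜)⁻¹ • u)
    (fun n => by
      rw [hcoord, norm_mul, norm_inv, RCLike.norm_ofReal, abs_of_pos ht]
      exact inv_mul_le_one_of_le₀ (hu n) ht.le)
    A D hAD (fun d hd => by rw [hcoord, hD d hd, mul_zero])
    (fun a ha j hj => hA a ha j (by simpa [hcoord, ht.ne'] using hj)) ε δ hε hδ
  rw [one_mul] at h
  rw [hscale, hscale, norm_smul, norm_smul (t : 𝕜)]
  exact mul_le_mul_of_nonneg_left h (norm_nonneg _)

/-- With `A = ∅`, the rescaled PSLC says `‖u‖ ≤ ‖u + λ 1_{δE}‖` for `λ ≥ ‖u‖_∞`; by convexity of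
`λ ↦ ‖u + λ 1_{δE}‖` this makes it nondecreasing on `[‖u‖_∞, ∞)`. -/
lemma PSLCWith.norm_add_smul_sgnSum_mono {u : X} {t t' : ℝ} (htt' : t ≤ t')
    (hu : ∀ n, ‖B.coord n u‖ ≤ t) {E : Finset ℕ} (huE : ∀ n ∈ E, B.coord n u = 0)
    {δ : ℕ → 𝕜} (hδ : ∀ n, ‖δ n‖ = 1) :
    ‖u + (t : 𝕜) • B.sgnSum δ E‖ ≤ ‖u + (t' : 𝕜) • B.sgnSum δ E‖ := by
  have ht : 0 ≤ t := le_trans (norm_nonneg _) (hu 0)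
  rcases (ht.trans htt').eq_or_lt with rfl | ht'
  · rw [le_antisymm htt' ht]
  have hu' : ‖u‖ ≤ ‖u + (t' : 𝕜) • B.sgnSum δ E‖ := by
    simpa [sgnSum] using hP.norm_add_smul_sgnSum_le (fun n => (hu n).trans htt')
      (A := ∅) (D := E) ⟨by simp, by simp, by simp⟩ huE (by simp) (fun _ => norm_one) hδ
  set r := t / t'
  have hr0 : 0 ≤ r := div_nonneg ht ht'.le
  have hr1 : r ≤ 1 := div_le_one_of_le₀ htt' ht'.le
  have hcomb : u + (t : 𝕜) • B.sgnSum δ E =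
      (r : 𝕜) • (u + (t' : 𝕜) • B.sgnSum δ E) + ((1 - r : ℝ) : 𝕜) • u := by
    have ht_eq : t = r * t' := (div_mul_cancel₀ t ht'.ne').symm
    rw [smul_add, smul_smul, ← RCLike.ofReal_mul, ← ht_eq, RCLike.ofReal_sub,
      RCLike.ofReal_one, sub_smul, one_smul]
    abel
  calc ‖u + (t : 𝕜) • B.sgnSum δ E‖
      ≤ r * ‖u + (t' : 𝕜) • B.sgnSum δ E‖ + (1 - r) * ‖u‖ := by
        rw [hcomb]
        refine (norm_add_le _ _).trans_eq ?_
        rw [norm_smul, norm_smul, RCLike.norm_ofReal, RCLike.norm_ofReal, abs_of_nonneg hr0,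
          abs_of_nonneg (by linarith)]
    _ ≤ ‖u + (t' : 𝕜) • B.sgnSum δ E‖ := by nlinarith

lemma PSLCWith.norm_add_smul_sgnSum_unitSign_le (s : ℕ → 𝕜) (E : Finset ℕ) :
    ∀ (u : X) (t : ℝ), (∀ n, ‖B.coord n u‖ ≤ t) → (∀ n ∈ E, B.coord n u = 0) →
      (∀ n ∈ E, t ≤ ‖s n‖) →
      ‖u + (t : 𝕜) • B.sgnSum (unitSign ∘ s) E‖ ≤ ‖u + ∑ n ∈ E, s n • B.e n‖ := by
  classical
  induction E using Finset.induction_on_min_value (fun n => ‖s n‖) with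
  | empty => intro u t _ _ _; simp [sgnSum]
  | insert d E hdE hmin ih =>
    intro u t hu huE hts
    -- Raise the whole block to height `‖s d‖`, then freeze `d` at its true value `s d`.
    have hcoord : ∀ n, B.coord n (u + s d • B.e d) = B.coord n u + if n = d then s d else 0 := by
      intro n
      rw [map_add, map_smul, B.biorth, smul_eq_mul, mul_ite, mul_one, mul_zero]
    have ih' := ih (u + s d • B.e d) ‖s d‖
      (fun n => by
        rw [hcoord]
        split_ifs with hn
        · rw [hn, huE d (mem_insert_self d E), zero_add]
        · rw [add_zero]
          exact (hu n).trans (hts d (mem_insert_self d E)))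
      (fun n hn => by
        rw [hcoord, huE n (mem_insert_of_mem hn), if_neg (ne_of_mem_of_not_mem hn hdE), add_zero])
      hmin
    have hlhs : u + s d • B.e d + ((‖s d‖ : ℝ) : 𝕜) • B.sgnSum (unitSign ∘ s) E =
        u + ((‖s d‖ : ℝ) : 𝕜) • B.sgnSum (unitSign ∘ s) (insert d E) := by
      rw [sgnSum, sgnSum, sum_insert hdE, smul_add, smul_smul, Function.comp_apply,
        norm_mul_unitSign]
      abel
    have hrhs : u + s d • B.e d + ∑ n ∈ E, s n • B.e n = u + ∑ n ∈ insert d E, s n • B.e n := by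
      rw [sum_insert hdE]
      abel
    rw [hlhs, hrhs] at ih'
    exact (hP.norm_add_smul_sgnSum_mono (hts d (mem_insert_self d E)) hu huE
      fun n => norm_unitSign (s n)).trans ih'

lemma PSLCWith.spgWith_one (hseq : StrictMono seq) : B.SPGWith seq 1 := by
  classical
  intro x m hm A hA hgr k hk
  obtain ⟨t, ht, hout, hin⟩ := hgr.exists_threshold (card_pos.1 (hA ▸ hm))
  set K := (range k).image seq
  set u := x - B.proj (A ∪ K) x
  have hu : ∀ n, B.coord n u = if n ∈ A ∪ K then 0 else B.coord n x := fun n => coord_sub_proj ..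
  have hut : ∀ n, ‖B.coord n u‖ ≤ t := by
    intro n
    rw [hu]
    split_ifs with hn
    · simpa using ht
    · exact hout n fun h => hn (mem_union_left K h)
  have hxA : x - B.proj A x = u + B.proj (K \ A) x := by
    rw [sub_proj_eq_sub_proj_add_proj_sdiff subset_union_left, union_sdiff_left]
  have hxK : x - B.proj K x = u + B.proj (A \ K) x := by
    rw [sub_proj_eq_sub_proj_add_proj_sdiff subset_union_right, union_sdiff_right]
  have hcard : #(K \ A) ≤ #(A \ K) := by
    rw [card_sdiff_le_card_sdiff_iff, card_image_of_injective _ hseq.injective, card_range]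
    omega
  rw [one_mul, projSeq_eq_proj_image hseq, hxA, hxK]
  obtain ⟨ε, hε, hconv⟩ := exists_norm_add_sum_smul_le u B.e (K \ A) (B.coord · x)
    fun n hn => hout n (mem_sdiff.1 hn).2
  calc ‖u + B.proj (K \ A) x‖ ≤ ‖u + (t : 𝕜) • B.sgnSum ε (K \ A)‖ := hconv
    _ ≤ ‖u + (t : 𝕜) • B.sgnSum (unitSign ∘ (B.coord · x)) (A \ K)‖ := by
        refine hP.norm_add_smul_sgnSum_le hut
          ⟨fun n hn => (mem_image.1 (mem_sdiff.1 hn).1).imp fun _ h => h.2, hcard,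
            fun a ha d hd hdr => hseq.lt_of_mem_image_range (mem_sdiff.1 ha).1 hdr
              (mem_sdiff.1 hd).2⟩
          (fun d hd => by rw [hu, if_pos (mem_union_left K (mem_sdiff.1 hd).1)])
          (fun a ha j hj hjr => hseq.lt_of_mem_image_range (mem_sdiff.1 ha).1 hjr fun hjK => ?_)
          hε fun n => norm_unitSign _
        rcases hj with hj | hj
        · exact (mem_sdiff.1 hj).2 hjK
        · exact hj (by rw [hu, if_pos (mem_union_right A hjK)])
    _ ≤ ‖u + B.proj (A \ K) x‖ :=
        hP.norm_add_smul_sgnSum_unitSign_le _ _ u t hut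
          (fun n hn => by rw [hu, if_pos (mem_union_left K (mem_sdiff.1 hn).1)])
          fun n hn => hin n (mem_sdiff.1 hn).1

end PSLC

lemma SPGWith.norm_add_sgnSum_le {seq : ℕ → ℕ} (hseq : StrictMono seq) (hS : B.SPGWith seq 1)
    {x : X} (hx : ∀ n, ‖B.coord n x‖ ≤ 1) {A D G : Finset ℕ} {κ : ℕ}
    (hAG : A ∪ G = (range κ).image seq) (hcard : #A ≤ #D) (hD : D.Nonempty)
    (hdisjAD : Disjoint A D) (hdisjAG : Disjoint A G) (hdisjDG : Disjoint D G)
    (hxF : ∀ n ∈ A ∪ (D ∪ G), B.coord n x = 0)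
    {ε δ : ℕ → 𝕜} (hε : ∀ n, ‖ε n‖ = 1) (hδ : ∀ n, ‖δ n‖ = 1) :
    ‖x + B.sgnSum ε A‖ ≤ ‖x + B.sgnSum δ D‖ := by
  classical
  set σ : ℕ → 𝕜 := fun n => if n ∈ A then ε n else δ n
  have hσ : ∀ n, ‖σ n‖ = 1 := fun n => by
    simp only [σ]
    split_ifs
    exacts [hε n, hδ n]
  have hσA : B.sgnSum σ A = B.sgnSum ε A := sum_congr rfl fun n hn => by simp [σ, hn]
  have hσD : B.sgnSum σ D = B.sgnSum δ D :=
    sum_congr rfl fun n hn => by simp [σ, disjoint_right.1 hdisjAD hn]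
  have hκ : κ ≤ #(D ∪ G) := by
    have hK : #((range κ).image seq) = κ := by
      rw [card_image_of_injective _ hseq.injective, card_range]
    rw [← hAG, card_union_of_disjoint hdisjAG] at hK
    rw [card_union_of_disjoint hdisjDG]
    omega
  have h := hS (x + B.sgnSum σ (A ∪ (D ∪ G))) _ (card_pos.2 (hD.mono subset_union_left))
    (D ∪ G) rfl (isGreedySet_add_sgnSum hx hxF hσ subset_union_right) κ hκ
  rwa [one_mul, projSeq_eq_proj_image hseq,
    sub_proj_add_sgnSum_union (disjoint_union_right.2 ⟨hdisjAD, hdisjAG⟩)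
      (fun n hn => hxF n (mem_union_right A hn)), hσA,
    union_left_comm, hAG,
    sub_proj_add_sgnSum_union (hAG ▸ disjoint_union_right.2 ⟨hdisjAD.symm, hdisjDG⟩)
      (fun n hn => hxF n (by rw [← hAG] at hn; simp only [mem_union] at hn ⊢; tauto)),
    hσD] at h

lemma SPGWith.pslcWith_one {seq : ℕ → ℕ} (hseq : StrictMono seq) (hS : B.SPGWith seq 1) :
    B.PSLCWith seq 1 := by
  intro x hx A D ⟨hAseq, hcard, hAD⟩ hxD hAx ε δ hε hδ
  rw [one_mul]
  rcases D.eq_empty_or_nonempty with rfl | hD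
  · simp [card_eq_zero.1 (Nat.le_zero.1 hcard), sgnSum]
  obtain ⟨κ, hAK, hKA⟩ := hseq.exists_image_range_supset hAseq
  set G := (range κ).image seq \ A
  have hxA : ∀ a ∈ A, B.coord a x = 0 := fun a ha => by
    by_contra h
    exact lt_irrefl a (hAx a ha a (Or.inr h) (hAseq ha))
  have hG : ∀ g ∈ G, g ∉ D ∧ B.coord g x = 0 := by
    intro g hg
    obtain ⟨hgK, hgA⟩ := mem_sdiff.1 hg
    obtain ⟨i, hi, rfl⟩ := mem_image.1 hgK
    obtain ⟨a, ha, hia⟩ := hKA i (mem_range.1 hi)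
    have hlt : seq i < a := lt_of_le_of_ne hia fun h => hgA (h ▸ ha)
    constructor
    · exact fun hgD => (hAD a ha _ hgD ⟨i, rfl⟩).not_gt hlt
    · by_contra h
      exact (hAx a ha _ (Or.inr h) ⟨i, rfl⟩).not_gt hlt
  refine hS.norm_add_sgnSum_le hseq hx (union_sdiff_of_subset hAK) hcard hD
    (disjoint_left.2 fun a ha haD => lt_irrefl a (hAD a ha a haD (hAseq ha))) disjoint_sdiff
    (disjoint_right.2 fun g hg => (hG g hg).1) (fun n hn => ?_) hε hδ
  rcases mem_union.1 hn with hn | hn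
  · exact hxA n hn
  rcases mem_union.1 hn with hn | hn
  exacts [hxD n hn, (hG n hn).2]

end BasisOf

theorem statement9_general {𝕜 X : Type*} [RCLike 𝕜] [NormedAddCommGroup X] [NormedSpace 𝕜 X]
    (B : BasisOf 𝕜 X) (seq : ℕ → ℕ) (hseq : StrictMono seq) :
    B.SPGWith seq 1 ↔ B.PSLCWith seq 1 :=
  ⟨fun h => h.pslcWith_one hseq, fun h => h.spgWith_one hseq⟩

/-- A basis is 1-(𝐧, strong partially greedy) iff it is 1-(𝐧, PSLC). -/
theorem statement9 {𝕜 X : Type*} [RCLike 𝕜] [NormedAddCommGroup X] [NormedSpace 𝕜 X]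
    [CompleteSpace X] (B : BasisOf 𝕜 X) (seq : ℕ → ℕ) (hseq : StrictMono seq) :
    B.SPGWith seq 1 ↔ B.PSLCWith seq 1 :=
  statement9_general B seq hseq
end
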